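/- arXiv:1405.7538 — 6 statements merged into one kernel-verified Lean document; each statement's English description precedes it below -/
import Mathlib

section
/- If 2 is a primitive root modulo an odd prime p, then the set P of even-weight polynomials in F_2[x]/(x^p - 1) is a field isomorphic to F_{2^{p-1}}, with multiplicative identity e(x) = x + x^2 + ... + x^{p-1}. -/
open Polynomial

/-- The quotient ring `F_2[x]/(x^p - 1)`. -/
abbrev QuotRing (p : ℕ) : Type :=
  Polynomial (ZMod 2) ⧸ Ideal.span {(X : Polynomial (ZMod 2)) ^ p - 1}

/-- The canonical projection `F_2[x] → F_2[x]/(x^p - 1)`. -/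
noncomputable def quotMk (p : ℕ) : Polynomial (ZMod 2) →+* QuotRing p :=
  Ideal.Quotient.mk _

/-- The set `P` of classes of even-weight polynomials in `F_2[x]/(x^p - 1)`,
where the weight of a polynomial is its number of nonzero coefficients. -/
noncomputable def evenWeightSet (p : ℕ) : Set (QuotRing p) :=
  quotMk p '' {q : Polynomial (ZMod 2) | Even q.support.card}

/-!
Take a primitive `p`-th root of unity `ζ` in `K = 𝔽_{2^(p-1)}`; it exists because
`p ∣ 2^(p-1) - 1`. The subfield `𝔽₂(ζ)` has `2^d` elements with `p ∣ 2^d - 1`, so the order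
`p - 1` of `2` modulo `p` divides `d`, and `ζ` generates `K`. Evaluation at `ζ` is then a ring map
`F_2[x]/(x^p - 1) → K` which is already onto on `P`, the kernel of evaluation at `1`: correct any
preimage by a multiple of `u = 1 + x + ⋯ + x^(p-1)`, which is `0` at `ζ` and `1` at `1`.
Since `|P| = 2^(p-1) = |K|`, it is a bijection from `P` to `K`, and `e = u - 1` maps to `1`.
-/

open IntermediateField Module

section FiniteField

variable {F L : Type*} [Field F] [Finite F] [Field L] [Algebra F L] [Finite L] {ζ : L} {n : ℕ}

theorem IsPrimitiveRoot.orderOf_natCard_dvd_finrank_adjoin (hζ : IsPrimitiveRoot ζ n)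
    (hn : n ≠ 0) : orderOf (Nat.card F : ZMod n) ∣ finrank F F⟮ζ⟯ := by
  have : Fintype F⟮ζ⟯ := Fintype.ofFinite _
  have hζ0 : AdjoinSimple.gen F ζ ≠ 0 := fun h => hζ.ne_zero hn (congrArg Subtype.val h)
  have hdvd : n ∣ Nat.card F ^ finrank F F⟮ζ⟯ - 1 := by
    rw [← Module.natCard_eq_pow_finrank, Nat.card_eq_fintype_card]
    exact hζ.dvd_of_pow_eq_one _ (congrArg Subtype.val (FiniteField.pow_card_sub_one_eq_one _ hζ0))
  refine orderOf_dvd_of_pow_eq_one ?_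
  rw [← Nat.cast_pow, ← Nat.cast_one, ZMod.natCast_eq_natCast_iff, Nat.ModEq.comm]
  exact (Nat.modEq_iff_dvd' (Nat.pow_pos Finite.card_pos)).2 hdvd

theorem IsPrimitiveRoot.adjoin_eq_top_of_orderOf_natCard_eq_finrank (hζ : IsPrimitiveRoot ζ n)
    (hn : n ≠ 0) (h : orderOf (Nat.card F : ZMod n) = finrank F L) : F⟮ζ⟯ = ⊤ := by
  refine eq_of_le_of_finrank_eq le_top ?_
  rw [finrank_top']
  refine Nat.dvd_antisymm ?_ (h ▸ hζ.orderOf_natCard_dvd_finrank_adjoin hn)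
  exact finrank_top' (F := F) (E := L) ▸ finrank_dvd_of_le_right le_top

theorem IsPrimitiveRoot.aeval_surjective_of_orderOf_natCard_eq_finrank (hζ : IsPrimitiveRoot ζ n)
    (hn : n ≠ 0) (h : orderOf (Nat.card F : ZMod n) = finrank F L) :
    Function.Surjective (aeval ζ : F[X] →ₐ[F] L) := by
  have htop := (adjoin_simple_eq_top_iff_of_isAlgebraic (Algebra.IsAlgebraic.isAlgebraic ζ)).1
    (hζ.adjoin_eq_top_of_orderOf_natCard_eq_finrank hn h)
  rwa [Algebra.adjoin_singleton_eq_range_aeval, AlgHom.range_eq_top] at htop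

end FiniteField

theorem exists_isPrimitiveRoot_of_dvd_natCard_sub_one {L : Type*} [Field L] [Finite L] {p : ℕ}
    [Fact p.Prime] (hp : p ∣ Nat.card L - 1) : ∃ ζ : L, IsPrimitiveRoot ζ p := by
  obtain ⟨u, hu⟩ := exists_prime_orderOf_dvd_card' (G := Lˣ) p (Nat.card_units L ▸ hp)
  exact ⟨u, by rw [← hu, ← orderOf_units]; exact IsPrimitiveRoot.orderOf _⟩

theorem Polynomial.eval_one_eq_zero_iff_even_card_support (q : (ZMod 2)[X]) :
    q.eval 1 = 0 ↔ Even q.support.card := by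
  have hone : ∀ a : ZMod 2, a ≠ 0 → a = 1 := by decide
  have hsum : q.eval 1 = q.support.card := by
    rw [eval_eq_sum, Polynomial.sum_def, Finset.card_eq_sum_ones, Nat.cast_sum]
    refine Finset.sum_congr rfl fun i hi => ?_
    rw [one_pow, mul_one, hone _ (mem_support_iff.mp hi), Nat.cast_one]
  rw [hsum, ZMod.natCast_eq_zero_iff, even_iff_two_dvd]

namespace QuotRing

variable {p : ℕ}

noncomputable def lift {A : Type*} [CommRing A] [Algebra (ZMod 2) A] (ζ : A) (hζ : ζ ^ p = 1) :
    QuotRing p →+* A :=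
  Ideal.Quotient.lift _ (aeval ζ).toRingHom fun q hq => by
    obtain ⟨c, rfl⟩ := Ideal.mem_span_singleton'.1 hq
    simp [hζ]

@[simp]
theorem lift_quotMk {A : Type*} [CommRing A] [Algebra (ZMod 2) A] (ζ : A) (hζ : ζ ^ p = 1)
    (q : (ZMod 2)[X]) : lift ζ hζ (quotMk p q) = aeval ζ q :=
  rfl

/-- `F_2[x]/(x^p - 1)` is the group algebra of the cyclic group of order `p`; evaluation at `1`
is its augmentation. -/
noncomputable def augmentation (p : ℕ) : QuotRing p →+* ZMod 2 :=
  lift 1 (one_pow p)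

theorem augmentation_quotMk (q : (ZMod 2)[X]) : augmentation p (quotMk p q) = q.eval 1 :=
  rfl

theorem mem_evenWeightSet_iff {r : QuotRing p} :
    r ∈ evenWeightSet p ↔ r ∈ RingHom.ker (augmentation p) := by
  rw [RingHom.mem_ker]
  constructor
  · rintro ⟨q, hq, rfl⟩
    exact (eval_one_eq_zero_iff_even_card_support q).2 hq
  · intro hr
    obtain ⟨q, rfl⟩ := Ideal.Quotient.mk_surjective r
    exact ⟨q, (eval_one_eq_zero_iff_even_card_support q).1 hr, rfl⟩

theorem add_mem_evenWeightSet {a b : QuotRing p} (ha : a ∈ evenWeightSet p)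
    (hb : b ∈ evenWeightSet p) : a + b ∈ evenWeightSet p :=
  mem_evenWeightSet_iff.2 (add_mem (mem_evenWeightSet_iff.1 ha) (mem_evenWeightSet_iff.1 hb))

theorem mul_mem_evenWeightSet (a : QuotRing p) {b : QuotRing p} (hb : b ∈ evenWeightSet p) :
    a * b ∈ evenWeightSet p :=
  mem_evenWeightSet_iff.2 (Ideal.mul_mem_left _ a (mem_evenWeightSet_iff.1 hb))

theorem natCard_eq_two_pow (hp : p ≠ 0) : Nat.card (QuotRing p) = 2 ^ p := by
  have hmonic : ((X : (ZMod 2)[X]) ^ p - 1).Monic := by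
    simpa using monic_X_pow_sub_C (1 : ZMod 2) hp
  let pb := AdjoinRoot.powerBasis' hmonic
  change Nat.card (AdjoinRoot _) = _
  rw [Nat.card_congr pb.basis.equivFun.toEquiv, Nat.card_fun, Nat.card_zmod,
    Nat.card_eq_fintype_card, Fintype.card_fin, AdjoinRoot.powerBasis'_dim]
  simpa using natDegree_X_pow_sub_C (n := p) (r := (1 : ZMod 2))

theorem natCard_evenWeightSet (hp : p ≠ 0) : Nat.card (evenWeightSet p) = 2 ^ (p - 1) := by
  let ε := (augmentation p).toAddMonoidHom
  have hsurj : Function.Surjective ε := fun a => ⟨quotMk p (C a), by simp [ε, augmentation_quotMk]⟩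
  have h := ε.ker.card_mul_index
  rw [AddSubgroup.index_ker, AddMonoidHom.range_eq_top.2 hsurj, AddSubgroup.card_top,
    Nat.card_zmod, natCard_eq_two_pow hp, ← Nat.pow_pred_mul hp.bot_lt] at h
  rw [show evenWeightSet p = ε.ker from Set.ext fun r => mem_evenWeightSet_iff]
  exact Nat.eq_of_mul_eq_mul_right two_pos h

theorem augmentation_geom_sum (hp : Odd p) :
    augmentation p (quotMk p (∑ i ∈ Finset.range p, X ^ i)) = 1 := by
  simp [augmentation_quotMk, (ZMod.natCast_eq_one_iff_odd).2 hp]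

theorem quotMk_sum_Icc (hp : p ≠ 0) :
    quotMk p (∑ i ∈ Finset.Icc 1 (p - 1), X ^ i) = quotMk p (∑ i ∈ Finset.range p, X ^ i) - 1 := by
  have hIcc : Finset.Icc 1 (p - 1) = Finset.Ico 1 p := by
    ext i
    simp only [Finset.mem_Icc, Finset.mem_Ico]
    omega
  rw [hIcc, Finset.sum_range_eq_add_Ico _ (Nat.pos_of_ne_zero hp), pow_zero, map_add, map_one,
    add_sub_cancel_left]

theorem augmentation_sum_Icc (hodd : Odd p) :
    augmentation p (quotMk p (∑ i ∈ Finset.Icc 1 (p - 1), X ^ i)) = 0 := by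
  rw [quotMk_sum_Icc hodd.pos.ne', map_sub, augmentation_geom_sum hodd, map_one, sub_self]

section Field

variable {K : Type*} [Field K] [Algebra (ZMod 2) K] {ζ : K}

theorem lift_geom_sum (hζ : IsPrimitiveRoot ζ p) (hp : 1 < p) :
    lift ζ hζ.pow_eq_one (quotMk p (∑ i ∈ Finset.range p, X ^ i)) = 0 := by
  simpa using hζ.geom_sum_eq_zero hp

theorem lift_sum_Icc (hζ : IsPrimitiveRoot ζ p) (hp : 1 < p) :
    lift ζ hζ.pow_eq_one (quotMk p (∑ i ∈ Finset.Icc 1 (p - 1), X ^ i)) = 1 := by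
  have : CharP K 2 := charP_of_injective_algebraMap' (ZMod 2) 2
  rw [quotMk_sum_Icc (by omega), map_sub, lift_geom_sum hζ hp, map_one, zero_sub, CharTwo.neg_eq]

theorem surjOn_lift_evenWeightSet (hζ : IsPrimitiveRoot ζ p) (hp : 1 < p) (hodd : Odd p)
    (hgen : Function.Surjective (aeval ζ : (ZMod 2)[X] →ₐ[ZMod 2] K)) :
    Set.SurjOn (lift ζ hζ.pow_eq_one) (evenWeightSet p) Set.univ := by
  intro y _
  obtain ⟨f, rfl⟩ := hgen y
  let u := quotMk p (∑ i ∈ Finset.range p, X ^ i)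
  refine ⟨quotMk p f - quotMk p (C (f.eval 1)) * u, mem_evenWeightSet_iff.2 ?_, ?_⟩
  · rw [RingHom.mem_ker, map_sub, map_mul, augmentation_geom_sum hodd, mul_one,
      augmentation_quotMk, augmentation_quotMk, eval_C, sub_self]
  · rw [map_sub, map_mul, lift_geom_sum hζ hp, mul_zero, sub_zero, lift_quotMk]

end Field

end QuotRing

/-- If 2 is a primitive root modulo an odd prime `p`, then the set `P` of
even-weight polynomials in `F_2[x]/(x^p - 1)` is a field isomorphic to
`F_{2^(p-1)}`, with multiplicative identity `e(x) = x + x^2 + ⋯ + x^(p-1)`. -/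
theorem evenWeightSet_is_field (p : ℕ) (hp : p.Prime) (hodd : Odd p)
    (h2 : orderOf (2 : ZMod p) = p - 1) :
    letI e : QuotRing p := quotMk p (∑ i ∈ Finset.Icc 1 (p - 1), X ^ i)
    e ∈ evenWeightSet p ∧
    (∀ a ∈ evenWeightSet p, e * a = a ∧ a * e = a) ∧
    ∃ F : {a : QuotRing p // a ∈ evenWeightSet p} ≃ GaloisField 2 (p - 1),
      (∀ a b : {a : QuotRing p // a ∈ evenWeightSet p},
        ∃ h : (a : QuotRing p) + b ∈ evenWeightSet p, F ⟨(a : QuotRing p) + b, h⟩ = F a + F b) ∧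
      (∀ a b : {a : QuotRing p // a ∈ evenWeightSet p},
        ∃ h : (a : QuotRing p) * b ∈ evenWeightSet p, F ⟨(a : QuotRing p) * b, h⟩ = F a * F b) := by
  have : Fact p.Prime := ⟨hp⟩
  have hdeg : p - 1 ≠ 0 := (Nat.sub_pos_of_lt hp.one_lt).ne'
  have hcard : Nat.card (GaloisField 2 (p - 1)) = 2 ^ (p - 1) := GaloisField.card 2 (p - 1) hdeg
  obtain ⟨ζ, hζ⟩ : ∃ ζ : GaloisField 2 (p - 1), IsPrimitiveRoot ζ p := by
    refine exists_isPrimitiveRoot_of_dvd_natCard_sub_one ?_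
    rw [hcard, ← ZMod.natCast_eq_zero_iff, Nat.cast_sub Nat.one_le_two_pow, sub_eq_zero]
    exact_mod_cast h2 ▸ pow_orderOf_eq_one (2 : ZMod p)
  have hgen := hζ.aeval_surjective_of_orderOf_natCard_eq_finrank hp.ne_zero
    (by rw [Nat.card_zmod, GaloisField.finrank 2 hdeg]; exact_mod_cast h2)
  set π := QuotRing.lift ζ hζ.pow_eq_one
  have hP := QuotRing.natCard_evenWeightSet hp.ne_zero
  have : Finite (evenWeightSet p) := Nat.finite_of_card_ne_zero (by rw [hP]; positivity)
  have hbij : Function.Bijective ((evenWeightSet p).domRestrict π) :=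
    (Set.surjOn_iff_surjective.1 (QuotRing.surjOn_lift_evenWeightSet hζ hp.one_lt hodd hgen)
      ).bijective_of_nat_card_le (hP.trans hcard.symm).le
  have hid : ∀ a ∈ evenWeightSet p, quotMk p (∑ i ∈ Finset.Icc 1 (p - 1), X ^ i) * a = a :=
    fun a ha => congrArg Subtype.val <|
      hbij.1 (a₁ := ⟨_, QuotRing.mul_mem_evenWeightSet _ ha⟩) (a₂ := ⟨a, ha⟩) <| by
        change π (_ * a) = π a
        rw [map_mul, QuotRing.lift_sum_Icc hζ hp.one_lt, one_mul]
  refine ⟨QuotRing.mem_evenWeightSet_iff.2 (QuotRing.augmentation_sum_Icc hodd),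
    fun a ha => ⟨hid a ha, mul_comm a _ ▸ hid a ha⟩, Equiv.ofBijective _ hbij,
    fun a b => ⟨QuotRing.add_mem_evenWeightSet a.2 b.2, map_add π (a : QuotRing p) b⟩,
    fun a b => ⟨QuotRing.mul_mem_evenWeightSet _ b.2, map_mul π (a : QuotRing p) b⟩⟩
end

section
/- Let C be a binary self-dual code of length n with an automorphism σ of odd prime order p. Then C decomposes as the direct sum C = F_σ(C) ⊕ E_σ(C), where F_σ(C) = {v ∈ C : vσ = v} and E_σ(C) is the subcode of codewords whose restriction to each cycle and fixed point of σ has even weight. -/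
open scoped Classical

/-- The Hamming weight of a binary vector. -/
noncomputable def wt {n : ℕ} (v : Fin n → ZMod 2) : ℕ :=
  (Finset.univ.filter fun i => v i ≠ 0).card

/-- The dual of a set of binary vectors with respect to the standard inner product. -/
def dualCode {n : ℕ} (C : Set (Fin n → ZMod 2)) : Set (Fin n → ZMod 2) :=
  {w | ∀ v ∈ C, ∑ i, v i * w i = 0}

section Aux

variable {n p : ℕ}

/-- `p • x = x` in `ZMod 2` for odd `p`. -/
lemma aux_odd_nsmul (hodd : Odd p) (x : ZMod 2) : p • x = x := by
  obtain ⟨m, rfl⟩ := hodd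
  rw [nsmul_eq_mul]
  push_cast
  have : (2 : ZMod 2) = 0 := rfl
  rw [this]
  ring

/-- If `σ i = i`, the cycle of `i` is `{i}`. -/
lemma aux_cycle_of_fixed (σ : Equiv.Perm (Fin n)) (i : Fin n) (hi : σ i = i) :
    Finset.univ.filter (fun j => σ.SameCycle i j) = {i} := by
  ext j
  simp only [Finset.mem_filter, Finset.mem_univ, true_and, Finset.mem_singleton]
  constructor
  · rintro ⟨z, rfl⟩
    have : Function.IsFixedPt σ i := hi
    exact this.perm_zpow z
  · rintro rfl
    exact ⟨0, by simp⟩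

/-- If `σ i ≠ i` and `σ` has prime order `p`, the cycle of `i` is the image of
`k ↦ σ^k i` over `range p`, and this map is injective there. -/
lemma aux_minimalPeriod (hp : p.Prime) (σ : Equiv.Perm (Fin n)) (hord : orderOf σ = p)
    (i : Fin n) (hi : σ i ≠ i) : Function.minimalPeriod σ i = p := by
  haveI : Fact p.Prime := ⟨hp⟩
  have hper : Function.IsPeriodicPt σ p i := by
    show σ^[p] i = i
    rw [Equiv.Perm.iterate_eq_pow, ← hord, pow_orderOf_eq_one]
    rfl
  exact Function.minimalPeriod_eq_prime hper hi

lemma aux_cycle_eq_image (hp : p.Prime) (σ : Equiv.Perm (Fin n)) (hord : orderOf σ = p)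
    (i : Fin n) (hi : σ i ≠ i) :
    Finset.univ.filter (fun j => σ.SameCycle i j)
      = (Finset.range p).image (fun k => (σ ^ k) i) := by
  ext j
  simp only [Finset.mem_filter, Finset.mem_univ, true_and, Finset.mem_image, Finset.mem_range]
  constructor
  · intro h
    obtain ⟨k, hk, hkeq⟩ := h.exists_pow_eq'
    exact ⟨k, hord ▸ hk, hkeq⟩
  · rintro ⟨k, _, rfl⟩
    exact ⟨(k : ℤ), by rw [zpow_natCast]⟩

lemma aux_injOn (hp : p.Prime) (σ : Equiv.Perm (Fin n)) (hord : orderOf σ = p)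
    (i : Fin n) (hi : σ i ≠ i) :
    Set.InjOn (fun k => (σ ^ k) i) (Finset.range p) := by
  intro a ha b hb hab
  simp only [Finset.coe_range, Set.mem_Iio] at ha hb
  have h := Function.iterate_injOn_Iio_minimalPeriod (f := ⇑σ) (x := i)
  rw [aux_minimalPeriod hp σ hord i hi] at h
  exact h ha hb hab

/-- The key sum identity: summing `f ∘ σ^k i` over `k < p` equals summing `f`
over the cycle of `i`. -/
lemma aux_sum_pow (hp : p.Prime) (hodd : Odd p) (σ : Equiv.Perm (Fin n))
    (hord : orderOf σ = p) (f : Fin n → ZMod 2) (i : Fin n) :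
    ∑ k ∈ Finset.range p, f ((σ ^ k) i)
      = ∑ j ∈ Finset.univ.filter (fun j => σ.SameCycle i j), f j := by
  by_cases hi : σ i = i
  · have hfix : ∀ k : ℕ, (σ ^ k) i = i := fun k => (Function.IsFixedPt.perm_pow hi k :)
    rw [aux_cycle_of_fixed σ i hi]
    simp only [hfix, Finset.sum_const, Finset.card_range, Finset.sum_singleton]
    exact aux_odd_nsmul hodd _
  · rw [aux_cycle_eq_image hp σ hord i hi,
      Finset.sum_image (fun a ha b hb h => aux_injOn hp σ hord i hi ha hb h)]

/-- The cycle of `i` is invariant under applying `σ` to the summation variable. -/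
lemma aux_sum_shift (σ : Equiv.Perm (Fin n)) (f : Fin n → ZMod 2) (i : Fin n) :
    ∑ j ∈ Finset.univ.filter (fun j => σ.SameCycle i j), f (σ j)
      = ∑ j ∈ Finset.univ.filter (fun j => σ.SameCycle i j), f j := by
  apply Finset.sum_nbij' (fun j => σ j) (fun j => σ.symm j)
  · intro j hj
    simp only [Finset.mem_filter, Finset.mem_univ, true_and] at hj ⊢
    exact hj.apply_right
  · intro j hj
    simp only [Finset.mem_filter, Finset.mem_univ, true_and] at hj ⊢
    have := (Equiv.Perm.sameCycle_apply_right (f := σ) (x := i) (y := σ.symm j))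
    rw [Equiv.apply_symm_apply] at this
    exact this.mp hj
  · intro j _; simp
  · intro j _; simp
  · intro j _; rfl

end Aux

/-- Let `C` be a binary self-dual code of length `n` with an automorphism `σ` of odd
prime order `p`.  Then `C` decomposes as a direct sum `C = F_σ(C) ⊕ E_σ(C)`:
every codeword is uniquely the sum of a codeword fixed by `σ` and a codeword whose
restriction to each cycle (orbit) of `σ` (including fixed points) has even weight. -/
theorem selfDual_decomposition {n p : ℕ} (hp : p.Prime) (hodd : Odd p)
    (C : Submodule (ZMod 2) (Fin n → ZMod 2))
    (hsd : (C : Set (Fin n → ZMod 2)) = dualCode (C : Set (Fin n → ZMod 2)))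
    (σ : Equiv.Perm (Fin n)) (hord : orderOf σ = p)
    (hauto : ∀ v ∈ C, (fun i => v (σ i)) ∈ C) :
    ∀ v ∈ C, ∃! ab : (Fin n → ZMod 2) × (Fin n → ZMod 2),
      (ab.1 ∈ C ∧ (∀ i, ab.1 (σ i) = ab.1 i)) ∧
      (ab.2 ∈ C ∧ ∀ i : Fin n,
        (∑ j ∈ Finset.univ.filter (fun j => σ.SameCycle i j), ab.2 j) = 0) ∧
      v = ab.1 + ab.2 := by
  intro v hv
  -- the averaging operator
  set A : (Fin n → ZMod 2) → (Fin n → ZMod 2) :=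
    fun w i => ∑ k ∈ Finset.range p, w ((σ ^ k) i) with hA
  -- iterates of codewords stay in the code
  have hpow : ∀ w ∈ C, ∀ k : ℕ, (fun i => w ((σ ^ k) i)) ∈ C := by
    intro w hw k
    induction k with
    | zero => simpa using hw
    | succ k ih =>
        have := hauto _ ih
        have heq : (fun i => (fun i => w ((σ ^ k) i)) (σ i))
            = fun i => w ((σ ^ (k + 1)) i) := by
          funext i
          simp [pow_succ, Equiv.Perm.mul_apply]
        rwa [heq] at this
  have hAmem : ∀ w ∈ C, A w ∈ C := by
    intro w hw
    have : A w = ∑ k ∈ Finset.range p, (fun i => w ((σ ^ k) i)) := by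
      funext i; simp [hA]
    rw [this]
    exact Submodule.sum_mem C fun k _ => hpow w hw k
  -- A w is σ-fixed
  have hAfix : ∀ w : Fin n → ZMod 2, ∀ i, A w (σ i) = A w i := by
    intro w i
    have key : ∀ k : ℕ, (σ ^ k) (σ i) = (σ ^ (k + 1)) i := by
      intro k; simp [pow_succ, Equiv.Perm.mul_apply]
    simp only [hA, key]
    have h1 : ∑ k ∈ Finset.range p, w ((σ ^ (k + 1)) i)
        = (∑ k ∈ Finset.range (p + 1), w ((σ ^ k) i)) - w ((σ ^ 0) i) := by
      rw [Finset.sum_range_succ']; ring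
    have h2 : (σ ^ p) i = i := by
      rw [← hord, pow_orderOf_eq_one]; rfl
    rw [h1, Finset.sum_range_succ, h2]
    simp
  -- A of a σ-fixed vector is itself
  have hAfixed_id : ∀ a : Fin n → ZMod 2, (∀ i, a (σ i) = a i) → A a = a := by
    intro a ha
    funext i
    have key : ∀ k : ℕ, a ((σ ^ k) i) = a i := by
      intro k
      induction k with
      | zero => rfl
      | succ k ih => rw [pow_succ', Equiv.Perm.mul_apply, ha, ih]
    simp only [hA, key, Finset.sum_const, Finset.card_range]
    exact aux_odd_nsmul hodd _
  -- A of an "even on each cycle" vector is zero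
  have hAeven_zero : ∀ b : Fin n → ZMod 2,
      (∀ i, (∑ j ∈ Finset.univ.filter (fun j => σ.SameCycle i j), b j) = 0) → A b = 0 := by
    intro b hb
    funext i
    simp only [hA]
    rw [aux_sum_pow hp hodd σ hord b i, hb i]
    rfl
  -- the cycle sums of A v agree with those of v
  have hAcyc : ∀ w : Fin n → ZMod 2, ∀ i,
      (∑ j ∈ Finset.univ.filter (fun j => σ.SameCycle i j), A w j)
        = ∑ j ∈ Finset.univ.filter (fun j => σ.SameCycle i j), w j := by
    intro w i
    have hshift : ∀ k : ℕ,
        (∑ j ∈ Finset.univ.filter (fun j => σ.SameCycle i j), w ((σ ^ k) j))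
          = ∑ j ∈ Finset.univ.filter (fun j => σ.SameCycle i j), w j := by
      intro k
      induction k with
      | zero => simp
      | succ k ih =>
          have : ∀ j : Fin n, w ((σ ^ (k + 1)) j) = (fun x => w ((σ ^ k) x)) (σ j) := by
            intro j; simp [pow_succ, Equiv.Perm.mul_apply]
          simp only [this]
          rw [aux_sum_shift σ (fun x => w ((σ ^ k) x)) i]
          exact ih
    simp only [hA]
    rw [Finset.sum_comm]
    simp only [hshift, Finset.sum_const, Finset.card_range]
    exact aux_odd_nsmul hodd _
  -- existence and uniqueness
  refine ⟨(A v, v + A v), ⟨⟨hAmem v hv, hAfix v⟩, ⟨C.add_mem hv (hAmem v hv), ?_⟩, ?_⟩, ?_⟩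
  · -- even cycle sums for v + A v
    intro i
    simp only [Pi.add_apply]
    rw [Finset.sum_add_distrib, hAcyc v i]
    exact CharTwo.add_self_eq_zero _
  · -- v = A v + (v + A v)
    funext i
    simp only [Pi.add_apply]
    have : ∀ x y : ZMod 2, x = y + (x + y) := by decide
    exact this _ _
  · -- uniqueness
    rintro ⟨a, b⟩ ⟨⟨haC, hafix⟩, ⟨hbC, hbeven⟩, hab⟩
    have hAv : A v = a := by
      have hAadd : A (a + b) = A a + A b := by
        funext i
        simp only [hA, Pi.add_apply]
        rw [Finset.sum_add_distrib]
      rw [hab, hAadd, hAfixed_id a hafix, hAeven_zero b hbeven, add_zero]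
    have hbv : b = v + A v := by
      rw [hAv, hab]
      funext i
      simp only [Pi.add_apply]
      have : ∀ x y : ZMod 2, y = x + y + x := by decide
      exact this _ _
    rw [Prod.ext_iff]
    exact ⟨hAv.symm, hbv⟩
end

section
/- Let C be a binary self-dual [n, n/2, d] code with an automorphism σ of odd prime order p of type p-(c; f) (c cycles of length p and f fixed points). Define g(s) = Σ_{i=0}^{s-1} ⌈d/2^i⌉. Then pc ≥ g((p-1)c/2), and if f > c then f ≥ g((f-c)/2). -/
open scoped Classical

/-!
Let `G` be the group generated by `σ`; its order divides `p`, so it is odd, and every orbit has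
length `1` or `p`. Summing coordinates over the orbits identifies the `σ`-fixed subcode of `C` with
a code of length `c + f` (the number of orbits). Since orbits have odd length, the dot product of
two fixed vectors equals that of their orbit sums, and averaging over `G` shows that the orbit sum
of any codeword is the orbit sum of a fixed codeword; hence this code is self-dual, of dimension
`(c + f) / 2`.

The codewords whose orbit sums vanish form a subcode of dimension at least
`n / 2 - (c + f) / 2 = (p - 1) c / 2` supported on the `p c` moved points. The fixed codewords
vanishing on the `c` nontrivial orbits form a subcode of dimension at least `(f - c) / 2` supported
on the `f` fixed points. The Griesmer bound, proved by passing to the residual code of a codeword of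
minimum weight, applied to these two subcodes gives the two inequalities.
-/

open Module Finset

lemma Nat.ceilDiv_ceilDiv (a : ℕ) {m k : ℕ} (hm : 0 < m) (hk : 0 < k) :
    a ⌈/⌉ m ⌈/⌉ k = a ⌈/⌉ (m * k) :=
  eq_of_forall_ge_iff fun x => by
    simp only [ceilDiv_le_iff_le_smul hk, ceilDiv_le_iff_le_smul hm,
      ceilDiv_le_iff_le_smul (Nat.mul_pos hm hk), smul_eq_mul, mul_assoc]

lemma ZMod.nsmul_eq_self_of_odd {k : ℕ} (hk : Odd k) (x : ZMod 2) : k • x = x := by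
  rw [nsmul_eq_mul, ZMod.natCast_eq_one_iff_odd.mpr hk, one_mul]

lemma Submodule.finrank_map_add_finrank_inf_ker {K V W : Type*} [DivisionRing K] [AddCommGroup V]
    [Module K V] [AddCommGroup W] [Module K W] (f : V →ₗ[K] W) (D : Submodule K V)
    [FiniteDimensional K D] :
    finrank K (D.map f) + finrank K (D ⊓ LinearMap.ker f : Submodule K V) = finrank K D := by
  have h := LinearMap.finrank_range_add_finrank_ker (f ∘ₗ D.subtype)
  rwa [LinearMap.range_comp, Submodule.range_subtype, LinearMap.ker_comp,
    (Submodule.equivSubtypeMap D _).finrank_eq, Submodule.map_comap_subtype] at h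

lemma finrank_le_finrank_inf_ker_funLeft_val {K Q : Type*} [Field K] [Fintype Q]
    (W : Submodule K (Q → K)) (T : Finset Q) :
    finrank K W ≤
      finrank K ↥(W ⊓ LinearMap.ker (LinearMap.funLeft K K ((↑) : T → Q))) + #T := by
  have h := Submodule.finrank_map_add_finrank_inf_ker (LinearMap.funLeft K K ((↑) : T → Q)) W
  have := Submodule.finrank_le (W.map (LinearMap.funLeft K K ((↑) : T → Q)))
  rw [finrank_fintype_fun_eq_card, Fintype.card_coe] at this
  omega

def griesmerSum (d k : ℕ) : ℕ := ∑ i ∈ range k, d ⌈/⌉ 2 ^ i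

lemma griesmerSum_succ (d k : ℕ) : griesmerSum d (k + 1) = d + griesmerSum (d ⌈/⌉ 2) k := by
  rw [griesmerSum, griesmerSum, sum_range_succ', add_comm, pow_zero, ceilDiv_one]
  congr 1
  refine sum_congr rfl fun i _ => ?_
  rw [pow_succ', Nat.ceilDiv_ceilDiv d two_pos (by positivity)]

section Griesmer

variable {ι : Type*}

def offSupport (v : ι → ZMod 2) : (ι → ZMod 2) →ₗ[ZMod 2] (ι → ZMod 2) :=
  LinearMap.pi fun i => if v i = 0 then LinearMap.proj i else 0

lemma offSupport_apply (v u : ι → ZMod 2) (i : ι) :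
    offSupport v u i = if v i = 0 then u i else 0 := by
  by_cases h : v i = 0 <;> simp [offSupport, h]

lemma offSupport_self (v : ι → ZMod 2) : offSupport v v = 0 := by
  funext i
  simp [offSupport_apply]

lemma offSupport_apply_eq_zero {S : Finset ι} {u v : ι → ZMod 2} (hS : ∀ i ∉ S, u i = 0)
    {i : ι} (hi : i ∉ S.filter (v · = 0)) : offSupport v u i = 0 := by
  rw [offSupport_apply]
  split_ifs with hvi
  · exact hS i fun hiS => hi (mem_filter.mpr ⟨hiS, hvi⟩)
  · rfl

variable [Fintype ι]

lemma hammingNorm_add_hammingNorm_add (u v : ι → ZMod 2) :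
    hammingNorm u + hammingNorm (u + v) = hammingNorm v + 2 * hammingNorm (offSupport v u) := by
  simp only [hammingNorm, card_filter, mul_sum, ← sum_add_distrib, offSupport_apply,
    Pi.add_apply]
  refine sum_congr rfl fun i _ => ?_
  have key : ∀ a b : ZMod 2, ((if a ≠ 0 then 1 else 0) + if a + b ≠ 0 then 1 else 0) =
      (if b ≠ 0 then 1 else 0) + 2 * if (if b = 0 then a else 0) ≠ 0 then 1 else 0 := by
    decide
  exact key (u i) (v i)

variable {D : Submodule (ZMod 2) (ι → ZMod 2)}

lemma exists_min_hammingNorm (hD : D ≠ ⊥) :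
    ∃ v ∈ D, v ≠ 0 ∧ ∀ u ∈ D, u ≠ 0 → hammingNorm v ≤ hammingNorm u := by
  obtain ⟨v, ⟨hvD, hv0⟩, hmin⟩ := Set.exists_min_image {u | u ∈ D ∧ u ≠ 0} hammingNorm
    (Set.toFinite _) ((Submodule.ne_bot_iff D).mp hD)
  exact ⟨v, hvD, hv0, fun u hu hu0 => hmin u ⟨hu, hu0⟩⟩

section MinWeight

variable {v : ι → ZMod 2} (hvD : v ∈ D)
  (hvmin : ∀ w ∈ D, w ≠ 0 → hammingNorm v ≤ hammingNorm w)
include hvD hvmin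

lemma hammingNorm_le_two_mul_offSupport {u : ι → ZMod 2} (hu : u ∈ D) (hu0 : u ≠ 0)
    (huv : u ≠ v) :
    hammingNorm v ≤ 2 * hammingNorm (offSupport v u) := by
  have huv0 : u + v ≠ 0 := fun h => huv (funext fun i => CharTwo.add_eq_zero.mp (congrFun h i))
  have := hammingNorm_add_hammingNorm_add u v
  have := hvmin u hu hu0
  have := hvmin (u + v) (D.add_mem hu hvD) huv0
  omega

lemma hammingNorm_le_two_mul_of_mem_map_offSupport {x : ι → ZMod 2}
    (hx : x ∈ D.map (offSupport v)) (hx0 : x ≠ 0) : hammingNorm v ≤ 2 * hammingNorm x := by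
  obtain ⟨u, hu, rfl⟩ := hx
  refine hammingNorm_le_two_mul_offSupport hvD hvmin hu ?_ ?_
  · rintro rfl
    exact hx0 (map_zero _)
  · rintro rfl
    exact hx0 (offSupport_self u)

lemma finrank_le_finrank_map_offSupport_add_one (hv0 : v ≠ 0) :
    finrank (ZMod 2) D ≤ finrank (ZMod 2) (D.map (offSupport v)) + 1 := by
  have hker : D ⊓ LinearMap.ker (offSupport v) ≤ Submodule.span (ZMod 2) {v} := by
    rintro u ⟨hu, hu0 : offSupport v u = 0⟩
    by_cases h : u = 0 ∨ u = v
    · rcases h with rfl | rfl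
      exacts [Submodule.zero_mem _, Submodule.mem_span_singleton_self _]
    · push Not at h
      have := hammingNorm_le_two_mul_offSupport hvD hvmin hu h.1 h.2
      rw [hu0, hammingNorm_zero, Nat.le_zero, hammingNorm_eq_zero] at this
      exact absurd this hv0
  have := Submodule.finrank_map_add_finrank_inf_ker (offSupport v) D
  have := (Submodule.finrank_mono hker).trans (finrank_span_le_card ({v} : Set _))
  rw [Set.toFinset_singleton, card_singleton] at this
  omega

end MinWeight

lemma card_filter_eq_zero_add_hammingNorm {S : Finset ι} {v : ι → ZMod 2}
    (hS : ∀ i ∉ S, v i = 0) : #(S.filter (v · = 0)) + hammingNorm v = #S := by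
  rw [← card_filter_add_card_filter_not (s := S) (p := (v · = 0)), hammingNorm]
  congr 2
  ext i
  simp only [mem_filter, mem_univ, true_and, iff_and_self]
  exact fun hi => by_contra fun hiS => hi (hS i hiS)

theorem griesmerSum_le_card (S : Finset ι) (hS : ∀ v ∈ D, ∀ i ∉ S, v i = 0) {d k : ℕ}
    (hk : k ≤ finrank (ZMod 2) D) (hd : ∀ v ∈ D, v ≠ 0 → d ≤ hammingNorm v) :
    griesmerSum d k ≤ #S := by
  induction k generalizing S D d with
  | zero => simp [griesmerSum]
  | succ k ih =>
    have hD : D ≠ ⊥ := by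
      rintro rfl
      simp at hk
    obtain ⟨v, hvD, hv0, hvmin⟩ := exists_min_hammingNorm hD
    have hrank := finrank_le_finrank_map_offSupport_add_one hvD hvmin hv0
    have hres := ih (S.filter (v · = 0)) (D := D.map (offSupport v)) (d := d ⌈/⌉ 2)
      (fun _ ⟨u, hu, hx⟩ _ hi => hx ▸ offSupport_apply_eq_zero (hS u hu) hi) (by omega)
      fun x hx hx0 => by
        rw [ceilDiv_le_iff_le_smul two_pos, smul_eq_mul]
        exact (hd v hvD hv0).trans (hammingNorm_le_two_mul_of_mem_map_offSupport hvD hvmin hx hx0)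
    rw [griesmerSum_succ, ← card_filter_eq_zero_add_hammingNorm (hS v hvD)]
    have := hd v hvD hv0
    omega

end Griesmer

section FiberSum

variable (R : Type*) {ι κ : Type*} [CommSemiring R] [Fintype ι] [DecidableEq κ] (π : ι → κ)

noncomputable def fiberSum : (ι → R) →ₗ[R] (κ → R) :=
  LinearMap.pi fun q => ∑ i with π i = q, LinearMap.proj i

variable {R π}

lemma fiberSum_apply (v : ι → R) (q : κ) : fiberSum R π v q = ∑ i with π i = q, v i := by
  simp [fiberSum]

lemma dotProduct_funLeft [Fintype κ] (v : ι → R) (y : κ → R) :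
    v ⬝ᵥ LinearMap.funLeft R R π y = fiberSum R π v ⬝ᵥ y := by
  simp only [dotProduct, fiberSum_apply, sum_mul, LinearMap.funLeft_apply]
  exact (sum_fiberwise _ π fun i => v i * y (π i)).symm.trans
    (sum_congr rfl fun q _ => sum_congr rfl fun i hi => by rw [(mem_filter.mp hi).2])

lemma fiberSum_funLeft (y : κ → R) (q : κ) :
    fiberSum R π (LinearMap.funLeft R R π y) q = #{i | π i = q} • y q := by
  rw [fiberSum_apply, ← sum_const]
  exact sum_congr rfl fun i hi => by rw [LinearMap.funLeft_apply, (mem_filter.mp hi).2]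

end FiberSum

section OrbitSum

open MulAction

variable {G ι : Type*} [Group G] [MulAction G ι]

variable (G) in
abbrev orbitMk : ι → orbitRel.Quotient G ι := Quotient.mk _

lemma orbitMk_eq_iff {i j : ι} : orbitMk G j = orbitMk G i ↔ j ∈ orbit G i :=
  Quotient.eq''.trans orbitRel_apply

lemma card_filter_smul_eq [Fintype G] (i : ι) (h : G) :
    #{g : G | g • i = h • i} = Fintype.card (stabilizer G i) := by
  rw [Fintype.card_subtype]
  refine card_nbij' (h⁻¹ * ·) (h * ·) ?_ ?_ ?_ ?_ <;> intro g hg <;>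
    simp_all [mul_smul]

variable [Fintype ι]

lemma card_fiber_orbitMk (i : ι) :
    #{j | orbitMk G j = orbitMk G i} = Fintype.card (orbit G i) := by
  rw [Fintype.card_subtype]
  simp only [orbitMk_eq_iff]

lemma filter_orbitMk_eq_singleton {i : ι} (hi : i ∈ fixedPoints G ι) :
    ({j | orbitMk G j = orbitMk G i} : Finset ι) = {i} := by
  ext j
  simp only [mem_filter, mem_univ, true_and, mem_singleton, orbitMk_eq_iff, mem_orbit_iff,
    mem_fixedPoints.mp hi]
  exact ⟨fun ⟨_, h⟩ => h.symm, fun h => ⟨1, h.symm⟩⟩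

lemma card_fiber_orbitMk_eq_one_iff (i : ι) :
    #{j | orbitMk G j = orbitMk G i} = 1 ↔ i ∈ fixedPoints G ι := by
  refine ⟨fun h g => ?_, fun hi => by rw [filter_orbitMk_eq_singleton hi, card_singleton]⟩
  obtain ⟨a, ha⟩ := card_eq_one.mp h
  have hmem : ∀ j ∈ orbit G i, j = a := fun j hj =>
    mem_singleton.mp (ha ▸ mem_filter.mpr ⟨mem_univ j, orbitMk_eq_iff.mpr hj⟩)
  rw [hmem _ (mem_orbit i g), hmem _ (mem_orbit_self i)]

lemma fiberSum_orbitMk_of_mem_fixedPoints {R : Type*} [CommSemiring R] (v : ι → R) {i : ι}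
    (hi : i ∈ fixedPoints G ι) : fiberSum R (orbitMk G) v (orbitMk G i) = v i := by
  rw [fiberSum_apply, filter_orbitMk_eq_singleton hi, sum_singleton]

lemma card_filter_orbitMk_mem (T : Finset (orbitRel.Quotient G ι)) :
    #{i | orbitMk G i ∈ T} = ∑ q ∈ T, #{j | orbitMk G j = q} := by
  rw [card_eq_sum_card_fiberwise (f := orbitMk G) (t := T) fun i hi => by simpa using hi]
  refine sum_congr rfl fun q hq => congr_arg card ?_
  ext j
  simp only [mem_filter, mem_univ, true_and, and_iff_right_iff_imp]
  rintro rfl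
  exact hq

variable (G ι) in
noncomputable def nontrivialOrbits : Finset (orbitRel.Quotient G ι) :=
  {q | #{j | orbitMk G j = q} ≠ 1}

lemma orbitMk_mem_nontrivialOrbits_iff {i : ι} :
    orbitMk G i ∈ nontrivialOrbits G ι ↔ i ∉ fixedPoints G ι := by
  simp [nontrivialOrbits, card_fiber_orbitMk_eq_one_iff]

lemma card_orbits_eq :
    Fintype.card (orbitRel.Quotient G ι) =
      #(nontrivialOrbits G ι) + #{i | i ∈ fixedPoints G ι} := by
  have hfix : #{i | i ∈ fixedPoints G ι} = #(nontrivialOrbits G ι)ᶜ :=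
    calc #{i | i ∈ fixedPoints G ι}
        _ = #{i | orbitMk G i ∈ (nontrivialOrbits G ι)ᶜ} := by
          simp_rw [mem_compl, orbitMk_mem_nontrivialOrbits_iff, not_not]
        _ = ∑ q ∈ (nontrivialOrbits G ι)ᶜ, 1 :=
          (card_filter_orbitMk_mem _).trans (sum_congr rfl fun q hq => by
            simpa [nontrivialOrbits] using hq)
        _ = #(nontrivialOrbits G ι)ᶜ := (card_eq_sum_ones _).symm
  rw [hfix, card_add_card_compl]

variable [Fintype G]

lemma card_fiber_orbitMk_dvd (i : ι) :
    #{j | orbitMk G j = orbitMk G i} ∣ Fintype.card G := by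
  rw [card_fiber_orbitMk, ← card_orbit_mul_card_stabilizer_eq_card_group G i]
  exact dvd_mul_right _ _

lemma sum_smul_apply {R : Type*} [CommSemiring R] (v : ι → R) (i : ι) :
    ∑ g : G, v (g • i) =
      Fintype.card (stabilizer G i) • fiberSum R (orbitMk G) v (orbitMk G i) := by
  rw [sum_comp v (· • i), fiberSum_apply, smul_sum]
  refine sum_congr ?_ fun j hj => ?_
  · ext j
    simp [orbitMk_eq_iff, mem_orbit_iff]
  · obtain ⟨h, rfl⟩ := orbitMk_eq_iff.mp (mem_filter.mp hj).2
    rw [card_filter_smul_eq]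

lemma card_not_mem_fixedPoints {p : ℕ} (hp : p.Prime) (hGp : Fintype.card G ∣ p) :
    #{i | i ∉ fixedPoints G ι} = p * #(nontrivialOrbits G ι) := by
  simp_rw [← orbitMk_mem_nontrivialOrbits_iff, card_filter_orbitMk_mem, mul_comm p]
  refine sum_const_nat fun q hq => ?_
  obtain ⟨i, rfl⟩ := Quotient.mk_surjective q
  have hq : #{j | orbitMk G j = orbitMk G i} ≠ 1 := (mem_filter.mp hq).2
  exact ((hp.eq_one_or_self_of_dvd _ ((card_fiber_orbitMk_dvd i).trans hGp)).resolve_left hq)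

end OrbitSum

def IsSelfDual {R ι : Type*} [CommSemiring R] [Fintype ι] (C : Submodule R (ι → R)) : Prop :=
  ∀ w, w ∈ C ↔ ∀ v ∈ C, v ⬝ᵥ w = 0

lemma IsSelfDual.two_mul_finrank_eq_card {K Q : Type*} [Field K] [Fintype Q]
    {W : Submodule K (Q → K)} (hW : IsSelfDual W) : 2 * finrank K W = Fintype.card Q := by
  let B : LinearMap.BilinForm K (Q → K) := dotProductBilin K K
  have hB : B.Nondegenerate :=
    ⟨fun x hx => funext fun q => by simpa [B] using hx (Pi.single q 1),
      fun y hy => funext fun q => by simpa [B] using hy (Pi.single q 1)⟩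
  have hWB : B.orthogonal W = W := by
    ext y
    rw [LinearMap.BilinForm.mem_orthogonal_iff, hW]
    rfl
  have := LinearMap.BilinForm.finrank_orthogonal hB W
  rw [hWB, finrank_fintype_fun_eq_card] at this
  have := Submodule.finrank_le W
  rw [finrank_fintype_fun_eq_card] at this
  omega

section SelfDualCode

open MulAction
open LinearMap (funLeft)

variable {G ι : Type*} [Group G] [Fintype G] [MulAction G ι] [Fintype ι]

variable (hG : Odd (Fintype.card G))
include hG

lemma fiberSum_orbitMk_funLeft (y : orbitRel.Quotient G ι → ZMod 2) :
    fiberSum (ZMod 2) (orbitMk G) (funLeft (ZMod 2) (ZMod 2) (orbitMk G) y) = y := by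
  funext q
  obtain ⟨i, rfl⟩ := Quotient.mk_surjective q
  rw [fiberSum_funLeft, ZMod.nsmul_eq_self_of_odd (hG.of_dvd_nat (card_fiber_orbitMk_dvd i))]

lemma funLeft_fiberSum_orbitMk (v : ι → ZMod 2) :
    funLeft (ZMod 2) (ZMod 2) (orbitMk G) (fiberSum (ZMod 2) (orbitMk G) v) =
      ∑ g : G, fun i => v (g • i) := by
  funext i
  have hstab : Fintype.card (stabilizer G i) ∣ Fintype.card G :=
    Dvd.intro_left _ (card_orbit_mul_card_stabilizer_eq_card_group G i)
  rw [Finset.sum_apply, sum_smul_apply, ZMod.nsmul_eq_self_of_odd (hG.of_dvd_nat hstab)]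
  rfl

variable {C : Submodule (ZMod 2) (ι → ZMod 2)}
  (hinv : ∀ g : G, ∀ v ∈ C, (fun i => v (g • i)) ∈ C)
include hinv

lemma fiberSum_orbitMk_mem_comap {v : ι → ZMod 2} (hv : v ∈ C) :
    fiberSum (ZMod 2) (orbitMk G) v ∈ C.comap (funLeft (ZMod 2) (ZMod 2) (orbitMk G)) := by
  rw [Submodule.mem_comap, funLeft_fiberSum_orbitMk hG]
  exact C.sum_mem fun g _ => hinv g v hv

lemma IsSelfDual.comap_funLeft_orbitMk (hC : IsSelfDual C) :
    IsSelfDual (C.comap (funLeft (ZMod 2) (ZMod 2) (orbitMk G))) := by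
  intro y
  constructor
  · intro hy x hx
    rw [← fiberSum_orbitMk_funLeft hG x, ← dotProduct_funLeft]
    exact (hC _).mp hy _ hx
  · intro hy
    refine (hC _).mpr fun v hv => ?_
    rw [dotProduct_funLeft]
    exact hy _ (fiberSum_orbitMk_mem_comap hG hinv hv)

theorem griesmerSum_le_card_not_mem_fixedPoints (hC : IsSelfDual C) {d : ℕ}
    (hd : ∀ v ∈ C, v ≠ 0 → d ≤ hammingNorm v) :
    griesmerSum d (finrank (ZMod 2) C - Fintype.card (orbitRel.Quotient G ι) / 2) ≤
      #{i | i ∉ fixedPoints G ι} := by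
  refine griesmerSum_le_card _ (D := C ⊓ LinearMap.ker (fiberSum (ZMod 2) (orbitMk G))) ?_ ?_
    fun v hv => hd v hv.1
  · rintro v ⟨-, hv : fiberSum (ZMod 2) (orbitMk G) v = 0⟩ i hi
    rw [← fiberSum_orbitMk_of_mem_fixedPoints v (by simpa using hi)]
    exact congrFun hv _
  · have hmap : C.map (fiberSum (ZMod 2) (orbitMk G)) ≤
        C.comap (funLeft (ZMod 2) (ZMod 2) (orbitMk G)) := by
      rintro _ ⟨v, hv, rfl⟩
      exact fiberSum_orbitMk_mem_comap hG hinv hv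
    have := Submodule.finrank_mono hmap
    have := Submodule.finrank_map_add_finrank_inf_ker (fiberSum (ZMod 2) (orbitMk G)) C
    have := (hC.comap_funLeft_orbitMk hG hinv).two_mul_finrank_eq_card
    omega

theorem griesmerSum_le_card_mem_fixedPoints (hC : IsSelfDual C) {d : ℕ}
    (hd : ∀ v ∈ C, v ≠ 0 → d ≤ hammingNorm v) :
    griesmerSum d (Fintype.card (orbitRel.Quotient G ι) / 2 - #(nontrivialOrbits G ι)) ≤
      #{i | i ∈ fixedPoints G ι} := by
  let lift := funLeft (ZMod 2) (ZMod 2) (orbitMk G : ι → _)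
  let restrict :=
    funLeft (ZMod 2) (ZMod 2) ((↑) : nontrivialOrbits G ι → orbitRel.Quotient G ι)
  let W := C.comap lift ⊓ LinearMap.ker restrict
  refine griesmerSum_le_card _ (D := W.map lift) ?_ ?_ ?_
  · rintro _ ⟨y, ⟨-, hy : restrict y = 0⟩, rfl⟩ i hi
    exact congrFun hy ⟨orbitMk G i, orbitMk_mem_nontrivialOrbits_iff.mpr (by simpa using hi)⟩
  · have hinj : Function.Injective lift :=
      LinearMap.funLeft_injective_of_surjective _ _ _ Quotient.mk_surjective
    rw [← (Submodule.equivMapOfInjective _ hinj W).finrank_eq]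
    have : finrank (ZMod 2) (C.comap lift) ≤ finrank (ZMod 2) W + #(nontrivialOrbits G ι) :=
      finrank_le_finrank_inf_ker_funLeft_val _ _
    have : 2 * finrank (ZMod 2) (C.comap lift) = Fintype.card (orbitRel.Quotient G ι) :=
      (hC.comap_funLeft_orbitMk hG hinv).two_mul_finrank_eq_card
    omega
  · rintro _ ⟨y, ⟨hy, -⟩, rfl⟩ hy0
    exact hd _ hy hy0

end SelfDualCode

section Perm

variable {α : Type*} (σ : Equiv.Perm α)

lemma Equiv.Perm.mem_fixedPoints_zpowers_iff {i : α} :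
    i ∈ MulAction.fixedPoints (Subgroup.zpowers σ) α ↔ σ i = i := by
  rw [MulAction.mem_fixedPoints]
  refine ⟨fun h => h ⟨σ, Subgroup.mem_zpowers σ⟩, ?_⟩
  rintro h ⟨_, k, rfl⟩
  exact Equiv.Perm.zpow_apply_eq_self_of_apply_eq_self h k

lemma Equiv.Perm.comp_zpowers_mem [Finite α] {R : Type*} [Semiring R] {C : Submodule R (α → R)}
    (hσ : ∀ v ∈ C, (fun i => v (σ i)) ∈ C) (g : Subgroup.zpowers σ) {v : α → R}
    (hv : v ∈ C) :
    (fun i => v (g • i)) ∈ C := by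
  have hpow : ∀ k : ℕ, (fun i => v ((σ ^ k) i)) ∈ C := fun k => by
    induction k with
    | zero => simpa using hv
    | succ k ih => simpa [pow_succ] using hσ _ ih
  obtain ⟨k, hk⟩ : (g : Equiv.Perm α) ∈ Submonoid.powers σ :=
    mem_powers_iff_mem_zpowers.mpr g.2
  change (fun i => v ((g : Equiv.Perm α) i)) ∈ C
  rw [← hk]
  exact hpow k

variable [Fintype α] [DecidableEq α] {p c : ℕ} (hct : σ.cycleType = Multiset.replicate c p)
include hct

lemma Equiv.Perm.card_zpowers_dvd : Fintype.card (Subgroup.zpowers σ) ∣ p := by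
  rw [Fintype.card_zpowers, ← Equiv.Perm.lcm_cycleType, hct]
  exact Multiset.lcm_dvd.mpr fun b hb => (Multiset.eq_of_mem_replicate hb).dvd

lemma Equiv.Perm.card_not_mem_fixedPoints_zpowers :
    #{i | i ∉ MulAction.fixedPoints (Subgroup.zpowers σ) α} = p * c := by
  simp_rw [σ.mem_fixedPoints_zpowers_iff]
  change #σ.support = p * c
  rw [← Equiv.Perm.sum_cycleType, hct, Multiset.sum_replicate, smul_eq_mul, mul_comm]

lemma Equiv.Perm.card_nontrivialOrbits_zpowers (hp : p.Prime) :
    #(nontrivialOrbits (Subgroup.zpowers σ) α) = c :=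
  Nat.eq_of_mul_eq_mul_left hp.pos <|
    (card_not_mem_fixedPoints hp (σ.card_zpowers_dvd hct)).symm.trans
      (σ.card_not_mem_fixedPoints_zpowers hct)

end Perm

theorem yorgov_type_constraints_general {n p c f d : ℕ} (hp : p.Prime) (hodd : Odd p)
    (C : Submodule (ZMod 2) (Fin n → ZMod 2))
    (hsd : (C : Set (Fin n → ZMod 2)) = dualCode (C : Set (Fin n → ZMod 2)))
    (hdim : Module.finrank (ZMod 2) C = n / 2)
    (hmin : ∀ v ∈ C, v ≠ 0 → d ≤ wt v)
    (σ : Equiv.Perm (Fin n))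
    (hauto : ∀ v ∈ C, (fun i => v (σ i)) ∈ C)
    (hct : σ.cycleType = Multiset.replicate c p)
    (hn : n = p * c + f) :
    letI g : ℕ → ℕ := fun s => ∑ i ∈ Finset.range s, (d + 2 ^ i - 1) / 2 ^ i
    p * c ≥ g ((p - 1) * c / 2) ∧ (f > c → f ≥ g ((f - c) / 2)) := by
  have hG : Odd (Fintype.card (Subgroup.zpowers σ)) := hodd.of_dvd_nat (σ.card_zpowers_dvd hct)
  have hC : IsSelfDual C := fun w => by rw [← SetLike.mem_coe, hsd]; rfl
  have hinv := σ.comp_zpowers_mem hauto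
  have hnonfix := σ.card_not_mem_fixedPoints_zpowers hct
  have hT := σ.card_nontrivialOrbits_zpowers hct hp
  have hfix : #{i | i ∈ MulAction.fixedPoints (Subgroup.zpowers σ) (Fin n)} = f := by
    have := card_filter_add_card_filter_not (s := univ)
      (· ∈ MulAction.fixedPoints (Subgroup.zpowers σ) (Fin n))
    rw [card_univ, Fintype.card_fin] at this
    omega
  have hQ := card_orbits_eq (G := Subgroup.zpowers σ) (ι := Fin n)
  rw [hT, hfix] at hQ
  obtain ⟨m, rfl⟩ := hodd
  refine ⟨?_, fun hfc => ?_⟩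
  · have := griesmerSum_le_card_not_mem_fixedPoints hG hinv hC hmin
    rw [hdim, hQ, hnonfix] at this
    have hk : (2 * m + 1 - 1) * c / 2 = n / 2 - (c + f) / 2 := by
      rw [hn, Nat.add_sub_cancel, show (2 * m + 1) * c + f = 2 * (m * c) + (c + f) by ring,
        mul_assoc]
      omega
    rw [hk]
    exact this
  · have := griesmerSum_le_card_mem_fixedPoints hG hinv hC hmin
    rw [hQ, hT, hfix] at this
    rw [show (f - c) / 2 = (c + f) / 2 - c by omega]
    exact this

/-- (Yorgov.)  Let `C` be a binary self-dual `[n, n/2, d]` code with an automorphism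
`σ` of odd prime order `p` of type `p-(c; f)` (`c` cycles of length `p` and `f` fixed
points, `n = pc + f`).  With `g s = ∑_{i=0}^{s-1} ⌈d/2^i⌉`, we have
`pc ≥ g((p-1)c/2)`, and `f ≥ g((f-c)/2)` whenever `f > c`. -/
theorem yorgov_type_constraints {n p c f d : ℕ} (hp : p.Prime) (hodd : Odd p)
    (C : Submodule (ZMod 2) (Fin n → ZMod 2))
    (hsd : (C : Set (Fin n → ZMod 2)) = dualCode (C : Set (Fin n → ZMod 2)))
    (hdim : Module.finrank (ZMod 2) C = n / 2)
    (hex : ∃ v ∈ C, v ≠ 0 ∧ wt v = d)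
    (hmin : ∀ v ∈ C, v ≠ 0 → d ≤ wt v)
    (σ : Equiv.Perm (Fin n))
    (hauto : ∀ v ∈ C, (fun i => v (σ i)) ∈ C)
    (hct : σ.cycleType = Multiset.replicate c p)
    (hn : n = p * c + f) :
    letI g : ℕ → ℕ := fun s => ∑ i ∈ Finset.range s, (d + 2 ^ i - 1) / 2 ^ i
    p * c ≥ g ((p - 1) * c / 2) ∧ (f > c → f ≥ g ((f - c) / 2)) :=
  yorgov_type_constraints_general hp hodd C hsd hdim hmin σ hauto hct hn
end

section
/- Let C be a singly even self-dual code of length n = 24m + 2 (m ≥ 1) with minimum distance d = 4m + 2 and shadow S of minimum weight 1. Then the shadow coefficients satisfy b_1 = b_2 = ⋯ = b_{m−2} = 0 and b_{m−1} = 0. -/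
open scoped Classical

/-- The shadow `S = C₀^⊥ \ C` of a singly even self-dual code `C`, where `C₀` is the
doubly even subcode. -/
def shadow {n : ℕ} (C : Submodule (ZMod 2) (Fin n → ZMod 2)) : Set (Fin n → ZMod 2) :=
  dualCode {v | v ∈ C ∧ wt v % 4 = 0} \ (C : Set (Fin n → ZMod 2))

lemma zmod2_mul (a b : ZMod 2) : a * b = if a ≠ 0 ∧ b ≠ 0 then (1 : ZMod 2) else 0 := by
  revert a b; decide

lemma inner_eq {n : ℕ} (v w : Fin n → ZMod 2) :
    ∑ i, v i * w i = ((Finset.univ.filter fun i => v i ≠ 0 ∧ w i ≠ 0).card : ZMod 2) := by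
  rw [Finset.card_filter, Nat.cast_sum]
  refine Finset.sum_congr rfl fun i _ => ?_
  rw [zmod2_mul]
  split <;> simp

lemma inner_self_eq {n : ℕ} (v : Fin n → ZMod 2) :
    ∑ i, v i * v i = (wt v : ZMod 2) := by
  rw [inner_eq, wt]
  congr 1
  simp [and_self]

lemma wt_even {n : ℕ} (C : Submodule (ZMod 2) (Fin n → ZMod 2))
    (hsd : (C : Set (Fin n → ZMod 2)) = dualCode (C : Set (Fin n → ZMod 2)))
    {v : Fin n → ZMod 2} (hv : v ∈ C) : wt v % 2 = 0 := by
  have h : v ∈ dualCode (C : Set (Fin n → ZMod 2)) := by rw [← hsd]; exact hv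
  have := h v hv
  rw [inner_self_eq] at this
  have : ((wt v : ℕ) : ZMod 2) = 0 := this
  rw [ZMod.natCast_eq_zero_iff, Nat.dvd_iff_mod_eq_zero] at this
  exact this

/-- `wt (u+v) + 2·|supp u ∩ supp v| = wt u + wt v`. -/
lemma wt_add_identity {n : ℕ} (u v : Fin n → ZMod 2) :
    wt (u + v) + 2 * (Finset.univ.filter fun i => u i ≠ 0 ∧ v i ≠ 0).card
      = wt u + wt v := by
  classical
  set A := Finset.univ.filter fun i => u i ≠ 0 with hA
  set B := Finset.univ.filter fun i => v i ≠ 0 with hB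
  have hsupp : (Finset.univ.filter fun i => (u + v) i ≠ 0) = (A ∪ B) \ (A ∩ B) := by
    ext i
    have h2 : ∀ a b : ZMod 2, (a + b ≠ 0 ↔ ((a ≠ 0 ∨ b ≠ 0) ∧ ¬(a ≠ 0 ∧ b ≠ 0))) := by
      decide
    simp [hA, hB, Finset.mem_filter, Finset.mem_sdiff, Finset.mem_union, Finset.mem_inter,
      Pi.add_apply, h2 (u i) (v i)]
  have hint : (Finset.univ.filter fun i => u i ≠ 0 ∧ v i ≠ 0) = A ∩ B := by
    ext i; simp [hA, hB, Finset.mem_filter, Finset.mem_inter]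
  have hsub : A ∩ B ⊆ A ∪ B := (Finset.inter_subset_left).trans Finset.subset_union_left
  have h1 : ((A ∪ B) \ (A ∩ B)).card = (A ∪ B).card - (A ∩ B).card :=
    Finset.card_sdiff_of_subset hsub
  have h2 : (A ∩ B).card ≤ (A ∪ B).card := Finset.card_le_card hsub
  have h3 : (A ∪ B).card + (A ∩ B).card = A.card + B.card :=
    Finset.card_union_add_card_inter A B
  rw [wt, wt, wt, hsupp, hint, h1, ← hA, ← hB]
  omega

lemma wt_add_le {n : ℕ} (u v : Fin n → ZMod 2) : wt (u + v) ≤ wt u + wt v := by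
  have := wt_add_identity u v; omega

/-- Orthogonal even-weight vectors: intersection size is even. -/
lemma inter_even {n : ℕ} {u v : Fin n → ZMod 2} (h : ∑ i, u i * v i = 0) :
    (Finset.univ.filter fun i => u i ≠ 0 ∧ v i ≠ 0).card % 2 = 0 := by
  rw [inner_eq] at h
  rwa [ZMod.natCast_eq_zero_iff, Nat.dvd_iff_mod_eq_zero] at h

/-- Sum of two singly-even codewords of a self-orthogonal code is doubly even. -/
lemma doubly_even_add {n : ℕ} {u v : Fin n → ZMod 2}
    (hu : wt u % 4 = 2) (hv : wt v % 4 = 2) (h : ∑ i, u i * v i = 0) :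
    wt (u + v) % 4 = 0 := by
  have h1 := wt_add_identity u v
  have h2 := inter_even h
  omega

/-- Let `C` be a singly even self-dual code of length `n = 24m + 2` (`m ≥ 1`) with
minimum distance `d = 4m + 2` and shadow of minimum weight 1.  Then the shadow
coefficients `b₁, …, b_{m-1}` all vanish: there is no shadow vector of weight `4j + 1`
for `1 ≤ j ≤ m − 1` (such a vector added to the weight-1 shadow vector would give a
codeword of weight at most `4m`, contradicting `d = 4m + 2`). -/
theorem shadow_coefficients_vanish (m : ℕ) (hm : 1 ≤ m)
    (C : Submodule (ZMod 2) (Fin (24 * m + 2) → ZMod 2))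
    (hsd : (C : Set (Fin (24 * m + 2) → ZMod 2)) =
      dualCode (C : Set (Fin (24 * m + 2) → ZMod 2)))
    (hsingly : ∃ v ∈ C, wt v % 4 = 2)
    (hex : ∃ v ∈ C, v ≠ 0 ∧ wt v = 4 * m + 2)
    (hmin : ∀ v ∈ C, v ≠ 0 → 4 * m + 2 ≤ wt v)
    (hshadow : ∃ u ∈ shadow C, wt u = 1) :
    ∀ j, 1 ≤ j → j ≤ m - 1 → Set.ncard {u ∈ shadow C | wt u = 4 * j + 1} = 0 := by
  obtain ⟨c, hcC, hc2⟩ := hsingly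
  obtain ⟨u, hu, hu1⟩ := hshadow
  -- key: for any shadow vector s and any singly even codeword w, ⟨w,s⟩ = 1
  have key : ∀ s ∈ shadow C, ∀ w ∈ C, wt w % 4 = 2 → ∑ i, w i * s i = 1 := by
    intro s hs w hwC hw2
    obtain ⟨hs0, hsC⟩ := hs
    by_contra hne
    have hzero : ∑ i, w i * s i = 0 := by
      have : ∀ a : ZMod 2, a ≠ 1 → a = 0 := by decide
      exact this _ hne
    -- then s ∈ dualCode C = C, contradiction
    apply hsC
    rw [hsd]
    intro v hvC
    by_cases h4 : wt v % 4 = 0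
    · exact hs0 v ⟨hvC, h4⟩
    · have hve : wt v % 2 = 0 := wt_even C hsd hvC
      have hv2 : wt v % 4 = 2 := by omega
      have hvw : v + w ∈ C := C.add_mem hvC hwC
      have horth : ∑ i, v i * w i = 0 := by
        have h : w ∈ dualCode (C : Set _) := by rw [← hsd]; exact hwC
        exact h v hvC
      have h40 : wt (v + w) % 4 = 0 := doubly_even_add hv2 hw2 horth
      have hsum := hs0 (v + w) ⟨hvw, h40⟩
      have hexp : ∑ i, (v + w) i * s i = ∑ i, v i * s i + ∑ i, w i * s i := by
        rw [← Finset.sum_add_distrib]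
        exact Finset.sum_congr rfl fun i _ => by rw [Pi.add_apply, add_mul]
      rw [hexp, hzero, add_zero] at hsum
      exact hsum
  intro j hj1 hj2
  rw [Set.ncard_eq_zero]
  · ext v
    simp only [Set.mem_setOf_eq, Set.mem_empty_iff_false, iff_false, not_and]
    intro hv hwv
    -- u + v ∈ C
    have hmem : u + v ∈ C := by
      have : u + v ∈ dualCode (C : Set _) := by
        intro w hwC
        have hexp : ∑ i, w i * (u + v) i = ∑ i, w i * u i + ∑ i, w i * v i := by
          rw [← Finset.sum_add_distrib]
          exact Finset.sum_congr rfl fun i _ => by rw [Pi.add_apply, mul_add]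
        by_cases h4 : wt w % 4 = 0
        · rw [hexp, hu.1 w ⟨hwC, h4⟩, hv.1 w ⟨hwC, h4⟩, add_zero]
        · have hwe : wt w % 2 = 0 := wt_even C hsd hwC
          have hw2 : wt w % 4 = 2 := by omega
          rw [hexp, key u hu w hwC hw2, key v hv w hwC hw2]
          decide
      have h2 : u + v ∈ (C : Set _) := by rw [hsd]; exact this
      exact h2
    have hne : u + v ≠ 0 := by
      intro h0
      have : u = v := by
        ext i
        have hz : u i + v i = 0 := by rw [← Pi.add_apply, h0]; rfl
        have : ∀ a b : ZMod 2, a + b = 0 → a = b := by decide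
        exact this _ _ hz
      rw [← this] at hwv
      omega
    have := hmin _ hmem hne
    have hle := wt_add_le u v
    omega
end

section
/- Let C be a singly even binary self-dual code of length n with minimum distance d, shadow S of minimum weight s with 2s − d ≤ 2, and let B_s be the number of shadow vectors of weight s. If u, v are distinct shadow vectors of weight s then their supports intersect in at most 1 coordinate, and consequently B_s ≤ n. -/
open scoped Classical

namespace ShadowAux

variable {n : ℕ}

noncomputable def interCard (u v : Fin n → ZMod 2) : ℕ :=
  (Finset.univ.filter fun i => u i ≠ 0 ∧ v i ≠ 0).card

lemma sum_mul_self (v : Fin n → ZMod 2) : ∑ i, v i * v i = (wt v : ZMod 2) := by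
  have h1 : ∀ a : ZMod 2, a * a = if a ≠ 0 then 1 else 0 := by decide
  calc ∑ i, v i * v i = ∑ i, if v i ≠ 0 then (1 : ZMod 2) else 0 :=
        Finset.sum_congr rfl fun i _ => h1 (v i)
    _ = (wt v : ZMod 2) := by rw [Finset.sum_boole]; rfl

lemma inner_eq_card (u v : Fin n → ZMod 2) :
    ∑ i, u i * v i = ((interCard u v : ℕ) : ZMod 2) := by
  have h : ∀ a b : ZMod 2, a * b = if a ≠ 0 ∧ b ≠ 0 then 1 else 0 := by decide
  calc ∑ i, u i * v i = ∑ i, if u i ≠ 0 ∧ v i ≠ 0 then (1 : ZMod 2) else 0 :=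
        Finset.sum_congr rfl fun i _ => h (u i) (v i)
    _ = _ := by rw [Finset.sum_boole]; rfl

lemma wt_add (u v : Fin n → ZMod 2) :
    wt (u + v) + 2 * interCard u v = wt u + wt v := by
  classical
  set A := Finset.univ.filter (fun i => u i ≠ 0) with hA
  set B := Finset.univ.filter (fun i => v i ≠ 0) with hB
  have hS : (Finset.univ.filter fun i => (u + v) i ≠ 0) = (A ∪ B) \ (A ∩ B) := by
    ext i
    simp only [hA, hB, Finset.mem_filter, Finset.mem_univ, true_and, Finset.mem_sdiff,
      Finset.mem_union, Finset.mem_inter, Pi.add_apply]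
    revert i
    intro i
    generalize u i = a
    generalize v i = b
    revert a b
    decide
  have hI : (Finset.univ.filter fun i => u i ≠ 0 ∧ v i ≠ 0) = A ∩ B := by
    ext i; simp [hA, hB]
  have hsub : A ∩ B ⊆ A ∪ B := (Finset.inter_subset_left).trans Finset.subset_union_left
  have h1 : ((A ∪ B) \ (A ∩ B)).card + (A ∩ B).card = (A ∪ B).card :=
    Finset.card_sdiff_add_card_eq_card hsub
  have h2 : (A ∪ B).card + (A ∩ B).card = A.card + B.card :=
    Finset.card_union_add_card_inter A B
  simp only [wt, interCard, hS, hI, ← hA, ← hB]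
  omega

variable {C : Submodule (ZMod 2) (Fin n → ZMod 2)}

lemma wt_even (hsd : (C : Set (Fin n → ZMod 2)) = dualCode (C : Set (Fin n → ZMod 2)))
    {w : Fin n → ZMod 2} (hw : w ∈ C) : wt w % 2 = 0 := by
  have h0 : w ∈ dualCode (C : Set (Fin n → ZMod 2)) := hsd ▸ hw
  have h1 : ∑ i, w i * w i = 0 := h0 w hw
  rw [sum_mul_self] at h1
  have := (ZMod.natCast_eq_zero_iff (wt w) 2).mp h1
  omega

lemma wt_add_mod4 (hsd : (C : Set (Fin n → ZMod 2)) = dualCode (C : Set (Fin n → ZMod 2)))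
    {w w' : Fin n → ZMod 2} (hw : w ∈ C) (hw' : w' ∈ C) :
    wt (w + w') % 4 = (wt w + wt w') % 4 := by
  have h0 : w' ∈ dualCode (C : Set (Fin n → ZMod 2)) := hsd ▸ hw'
  have h1 : ∑ i, w i * w' i = 0 := h0 w hw
  rw [inner_eq_card] at h1
  have h2 := (ZMod.natCast_eq_zero_iff (interCard w w') 2).mp h1
  have h3 := wt_add w w'
  omega

lemma shadow_pair (hsd : (C : Set (Fin n → ZMod 2)) = dualCode (C : Set (Fin n → ZMod 2)))
    {u w : Fin n → ZMod 2} (hu : u ∈ shadow C) (hw : w ∈ C) (h4 : wt w % 4 = 2) :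
    ∑ i, w i * u i = 1 := by
  obtain ⟨hu0, hu1⟩ := hu
  rw [hsd] at hu1
  have hnot : ¬ ∀ v ∈ (C : Set (Fin n → ZMod 2)), ∑ i, v i * u i = 0 := hu1
  push_neg at hnot
  obtain ⟨w0, hw0C, hw0⟩ := hnot
  have hone : ∀ a : ZMod 2, a ≠ 0 → a = 1 := by decide
  have hw0' : ∑ i, w0 i * u i = 1 := hone _ hw0
  have hw0e := wt_even hsd hw0C
  have hw04 : wt w0 % 4 = 2 := by
    by_contra h
    have h0 : wt w0 % 4 = 0 := by omega
    have := hu0 w0 ⟨hw0C, h0⟩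
    rw [this] at hw0'
    exact absurd hw0' (by decide)
  by_contra hne
  have hzero : ∑ i, w i * u i = 0 := by
    have h' : ∀ a : ZMod 2, a ≠ 1 → a = 0 := by decide
    exact h' _ hne
  have hsum : w + w0 ∈ C := C.add_mem hw hw0C
  have h40 : wt (w + w0) % 4 = 0 := by
    have := wt_add_mod4 hsd hw hw0C; omega
  have hzz := hu0 (w + w0) ⟨hsum, h40⟩
  rw [show ∑ i, (w + w0) i * u i = ∑ i, w i * u i + ∑ i, w0 i * u i from by
    rw [← Finset.sum_add_distrib]
    exact Finset.sum_congr rfl fun i _ => by rw [Pi.add_apply, add_mul]] at hzz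
  rw [hzero, hw0'] at hzz
  exact absurd hzz (by decide)

lemma add_mem_of_shadow (hsd : (C : Set (Fin n → ZMod 2)) = dualCode (C : Set (Fin n → ZMod 2)))
    {u v : Fin n → ZMod 2} (hu : u ∈ shadow C) (hv : v ∈ shadow C) : u + v ∈ C := by
  rw [← SetLike.mem_coe, hsd]
  intro w hw
  have he := wt_even hsd hw
  have hsplit : ∑ i, w i * (u + v) i = ∑ i, w i * u i + ∑ i, w i * v i := by
    rw [← Finset.sum_add_distrib]
    exact Finset.sum_congr rfl fun i _ => by rw [Pi.add_apply, mul_add]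
  rcases (by omega : wt w % 4 = 0 ∨ wt w % 4 = 2) with h | h
  · rw [hsplit, hu.1 w ⟨hw, h⟩, hv.1 w ⟨hw, h⟩, add_zero]
  · rw [hsplit, shadow_pair hsd hu hw h, shadow_pair hsd hv hw h]
    decide

end ShadowAux

set_option maxHeartbeats 1000000 in
/-- Let `C` be a singly even binary self-dual code of length `n` with minimum distance
`d`, and let its shadow have minimum weight `s` with `2s − d ≤ 2`.  Then any two
distinct shadow vectors of weight `s` have supports meeting in at most one coordinate,
and the number `B_s` of shadow vectors of weight `s` satisfies `B_s ≤ n`. -/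
theorem shadow_min_weight_count_le (n d s : ℕ)
    (C : Submodule (ZMod 2) (Fin n → ZMod 2))
    (hsd : (C : Set (Fin n → ZMod 2)) = dualCode (C : Set (Fin n → ZMod 2)))
    (hsingly : ∃ v ∈ C, wt v % 4 = 2)
    (hex : ∃ v ∈ C, v ≠ 0 ∧ wt v = d)
    (hmin : ∀ v ∈ C, v ≠ 0 → d ≤ wt v)
    (hs_ex : ∃ u ∈ shadow C, wt u = s)
    (hs_min : ∀ u ∈ shadow C, s ≤ wt u)
    (h2s : 2 * s ≤ d + 2) :
    (∀ u ∈ shadow C, ∀ v ∈ shadow C, wt u = s → wt v = s → u ≠ v →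
      (Finset.univ.filter fun i => u i ≠ 0 ∧ v i ≠ 0).card ≤ 1) ∧
    Set.ncard {u ∈ shadow C | wt u = s} ≤ n := by
  classical
  open ShadowAux in
  have key : ∀ u ∈ shadow C, ∀ v ∈ shadow C, wt u = s → wt v = s → u ≠ v →
      u + v ∈ C ∧ wt (u + v) + 2 * interCard u v = 2 * s ∧ interCard u v ≤ 1 := by
    intro u hu v hv hwu hwv hne
    have hC := add_mem_of_shadow hsd hu hv
    have hne0 : u + v ≠ 0 := by
      intro h
      apply hne
      have hz : ∀ a b : ZMod 2, a + b = 0 → a = b := by decide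
      exact funext fun i => hz _ _ (congrFun h i)
    have hd := hmin _ hC hne0
    have hw3 := wt_add u v
    rw [hwu, hwv] at hw3
    exact ⟨hC, by omega, by omega⟩
  constructor
  · intro u hu v hv hwu hwv hne
    exact (key u hu v hv hwu hwv hne).2.2
  · -- Part 2
    set T : Finset (Fin n → ZMod 2) :=
      Finset.univ.filter (fun u => u ∈ shadow C ∧ wt u = s) with hT
    have hset : {u ∈ shadow C | wt u = s} = (↑T : Set (Fin n → ZMod 2)) := by
      ext u; simp [hT]
    rw [hset, Set.ncard_coe_finset]
    obtain ⟨u0, hu0S, hu0w⟩ := hs_ex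
    have hmemT : ∀ u ∈ T, u ∈ shadow C ∧ wt u = s := by
      intro u hu; simpa [hT] using hu
    have hu0T : u0 ∈ T := by simp [hT, hu0S, hu0w]
    have hs0 : s ≠ 0 := by
      intro h
      have h0 : (Finset.univ.filter fun i => u0 i ≠ 0) = ∅ :=
        Finset.card_eq_zero.mp (by rw [← h, ← hu0w]; rfl)
      have hz : u0 = 0 := by
        funext i
        show u0 i = 0
        by_contra hi
        have : i ∈ (Finset.univ.filter fun i => u0 i ≠ 0) := by simp [hi]
        simp [h0] at this
      exact hu0S.2 (by rw [hz]; exact C.zero_mem)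
    have hpair : ∀ u ∈ T, ∀ v ∈ T, u ≠ v →
        wt (u + v) + 2 * ShadowAux.interCard u v = 2 * s ∧ ShadowAux.interCard u v ≤ 1 := by
      intro u hu v hv hne
      obtain ⟨huS, huw⟩ := hmemT u hu
      obtain ⟨hvS, hvw⟩ := hmemT v hv
      exact ⟨(key u huS v hvS huw hvw hne).2.1, (key u huS v hvS huw hvw hne).2.2⟩
    have hclass : ∀ u ∈ T, ∀ v ∈ T,
        wt (u + v) % 4 = (wt (u + u0) % 4 + wt (v + u0) % 4) % 4 := by
      intro u hu v hv
      obtain ⟨huS, _⟩ := hmemT u hu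
      obtain ⟨hvS, _⟩ := hmemT v hv
      have h1 : u + u0 ∈ C := ShadowAux.add_mem_of_shadow hsd huS hu0S
      have h2 : v + u0 ∈ C := ShadowAux.add_mem_of_shadow hsd hvS hu0S
      have h3 : (u + u0) + (v + u0) = u + v := by
        funext i
        simp only [Pi.add_apply]
        have hz : ∀ a b c : ZMod 2, a + b + (c + b) = a + c := by decide
        exact hz _ _ _
      have h4 := ShadowAux.wt_add_mod4 hsd h1 h2
      rw [h3] at h4
      omega
    have heven : ∀ u ∈ T, wt (u + u0) % 2 = 0 := by
      intro u hu
      exact ShadowAux.wt_even hsd (ShadowAux.add_mem_of_shadow hsd (hmemT u hu).1 hu0S)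
    by_cases hs1 : s = 1
    · -- weight-1 vectors: inject via support
      subst hs1
      have hinj : Set.InjOn (fun u : Fin n → ZMod 2 => Finset.univ.filter fun i => u i ≠ 0) ↑T := by
        intro u _ v _ h
        funext i
        have hiff : (u i ≠ 0) ↔ (v i ≠ 0) := by
          have := Finset.ext_iff.mp h i
          simpa using this
        have hz : ∀ a b : ZMod 2, ((a ≠ 0) ↔ (b ≠ 0)) → a = b := by decide
        exact hz _ _ hiff
      calc T.card = (T.image fun u => Finset.univ.filter fun i => u i ≠ 0).card :=
            (Finset.card_image_of_injOn hinj).symm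
        _ ≤ ((Finset.univ : Finset (Fin n)).powersetCard 1).card := by
            apply Finset.card_le_card
            intro A hA
            simp only [Finset.mem_image] at hA
            obtain ⟨u, huT, rfl⟩ := hA
            rw [Finset.mem_powersetCard]
            exact ⟨Finset.subset_univ _, (hmemT u huT).2⟩
        _ = n := by
            rw [Finset.card_powersetCard]
            simp
    rcases Nat.even_or_odd s with hpar | hpar
    · -- s even, s ≥ 2 : within each class supports are pairwise disjoint
      have hseven : s % 2 = 0 := Nat.even_iff.mp hpar
      have hs2 : 2 ≤ s := by omega
      have hcount : ∀ A : Finset (Fin n → ZMod 2), A ⊆ T →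
          (∀ u ∈ A, ∀ v ∈ A, u ≠ v → ShadowAux.interCard u v = 0) →
          2 * A.card ≤ n := by
        intro A hsubT hp
        have hdisj : ∀ u ∈ A, ∀ v ∈ A, u ≠ v →
            Disjoint (Finset.univ.filter fun i => u i ≠ 0) (Finset.univ.filter fun i => v i ≠ 0) := by
          intro u hu v hv hne
          have h0 := hp u hu v hv hne
          have hempty : (Finset.univ.filter fun i => u i ≠ 0 ∧ v i ≠ 0) = ∅ :=
            Finset.card_eq_zero.mp h0
          rw [Finset.disjoint_left]
          intro i hiu hiv
          have : i ∈ (Finset.univ.filter fun i => u i ≠ 0 ∧ v i ≠ 0) := by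
            simp only [Finset.mem_filter, Finset.mem_univ, true_and] at hiu hiv ⊢
            exact ⟨hiu, hiv⟩
          simp [hempty] at this
        have hbu : (A.biUnion fun u => Finset.univ.filter fun i => u i ≠ 0).card
            = ∑ u ∈ A, (Finset.univ.filter fun i => u i ≠ 0).card :=
          Finset.card_biUnion hdisj
        have hsum : ∑ u ∈ A, (Finset.univ.filter fun i => u i ≠ 0).card = A.card * s := by
          have h1 : ∀ u ∈ A, (Finset.univ.filter fun i => u i ≠ 0).card = s :=
            fun u hu => (hmemT u (hsubT hu)).2
          rw [Finset.sum_congr rfl h1, Finset.sum_const, smul_eq_mul]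
        have hle : (A.biUnion fun u => Finset.univ.filter fun i => u i ≠ 0).card ≤ n := by
          have := Finset.card_le_univ (A.biUnion fun u => Finset.univ.filter fun i => u i ≠ 0)
          simpa using this
        have h2le : A.card * 2 ≤ A.card * s := Nat.mul_le_mul le_rfl hs2
        calc 2 * A.card = A.card * 2 := Nat.mul_comm _ _
          _ ≤ A.card * s := h2le
          _ = (A.biUnion fun u => Finset.univ.filter fun i => u i ≠ 0).card := by
              rw [hbu, hsum]
          _ ≤ n := hle
      have hA := hcount (T.filter fun u => wt (u + u0) % 4 = 0) (Finset.filter_subset _ _) ?_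
      rotate_left
      · intro u hu v hv hne
        rw [Finset.mem_filter] at hu hv
        have h1 := hpair u hu.1 v hv.1 hne
        have h2 := hclass u hu.1 v hv.1
        have hqu := hu.2
        have hqv := hv.2
        omega
      have hB := hcount (T.filter fun u => ¬ wt (u + u0) % 4 = 0) (Finset.filter_subset _ _) ?_
      rotate_left
      · intro u hu v hv hne
        rw [Finset.mem_filter] at hu hv
        have h1 := hpair u hu.1 v hv.1 hne
        have h2 := hclass u hu.1 v hv.1
        have h3 := heven u hu.1
        have h4 := heven v hv.1
        have hqu := hu.2
        have hqv := hv.2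
        omega
      have hsplit := Finset.card_filter_add_card_filter_not
        (s := T) (p := fun u => wt (u + u0) % 4 = 0)
      omega
    · -- s odd, s ≥ 3 : linear-algebra (Fisher-type) bound
      have hsodd : s % 2 = 1 := Nat.odd_iff.mp hpar
      have hs3 : 3 ≤ s := by omega
      set x : (Fin n → ZMod 2) → (Fin n → ℝ) := fun u i => if u i ≠ 0 then 1 else 0 with hx
      have hxJ : ∀ u v : Fin n → ZMod 2,
          ∑ i, x u i * x v i = (ShadowAux.interCard u v : ℝ) := by
        intro u v
        have h1 : ∀ i, x u i * x v i = if (u i ≠ 0 ∧ v i ≠ 0) then (1:ℝ) else 0 := by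
          intro i
          by_cases h1 : u i ≠ 0 <;> by_cases h2 : v i ≠ 0 <;> simp [hx, h1, h2]
        rw [Finset.sum_congr rfl fun i _ => h1 i, Finset.sum_boole]
        rfl
      have hJuu : ∀ u ∈ T, ShadowAux.interCard u u = s := by
        intro u hu
        have h2 := (hmemT u hu).2
        have h3 : ShadowAux.interCard u u = wt u := by
          simp [ShadowAux.interCard, wt, and_self]
        omega
      have hJval : ∀ u ∈ T, ∀ v ∈ T, u ≠ v →
          (ShadowAux.interCard u v : ℝ)
            = if (wt (u + u0) % 4 = 0 ↔ wt (v + u0) % 4 = 0) then 1 else 0 := by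
        intro u hu v hv hne
        have h1 := hpair u hu v hv hne
        have h2 := hclass u hu v hv
        have h3 := heven u hu
        have h4 := heven v hv
        by_cases hiff : (wt (u + u0) % 4 = 0 ↔ wt (v + u0) % 4 = 0)
        · rw [if_pos hiff]
          have h5 : ShadowAux.interCard u v = 1 := by
            by_cases hq : wt (u + u0) % 4 = 0
            · have hq' := hiff.mp hq; omega
            · have hq' : ¬ wt (v + u0) % 4 = 0 := fun h => hq (hiff.mpr h); omega
          rw [h5]; norm_num
        · rw [if_neg hiff]
          have h5 : ShadowAux.interCard u v = 0 := by
            by_cases hq : wt (u + u0) % 4 = 0 <;> by_cases hq' : wt (v + u0) % 4 = 0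
            · exact absurd (iff_of_true hq hq') hiff
            · omega
            · omega
            · exact absurd (iff_of_false hq hq') hiff
          rw [h5]; norm_num
      have hli : LinearIndependent ℝ (fun u : {y // y ∈ T} => x ↑u) := by
        rw [Fintype.linearIndependent_iff]
        intro g hg
        have hcoord : ∀ i, ∑ u : {y // y ∈ T}, g u * x ↑u i = 0 := by
          intro i
          have h0 := congrFun hg i
          simpa using h0
        have h2 : ∑ i, (∑ u : {y // y ∈ T}, g u * x ↑u i)
            * (∑ v : {y // y ∈ T}, g v * x ↑v i) = 0 :=
          Finset.sum_eq_zero fun i _ => by rw [hcoord i, zero_mul]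
        have h3 : ∑ i, (∑ u : {y // y ∈ T}, g u * x ↑u i) * (∑ v : {y // y ∈ T}, g v * x ↑v i)
            = ∑ u : {y // y ∈ T}, ∑ v : {y // y ∈ T},
                g u * g v * (ShadowAux.interCard u.1 v.1 : ℝ) := by
          calc ∑ i, (∑ u : {y // y ∈ T}, g u * x ↑u i) * (∑ v : {y // y ∈ T}, g v * x ↑v i)
              = ∑ i, ∑ u : {y // y ∈ T}, ∑ v : {y // y ∈ T},
                  (g u * x ↑u i) * (g v * x ↑v i) :=
                Finset.sum_congr rfl fun i _ => Finset.sum_mul_sum _ _ _ _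
            _ = ∑ u : {y // y ∈ T}, ∑ i, ∑ v : {y // y ∈ T},
                  (g u * x ↑u i) * (g v * x ↑v i) := Finset.sum_comm
            _ = ∑ u : {y // y ∈ T}, ∑ v : {y // y ∈ T}, ∑ i,
                  (g u * x ↑u i) * (g v * x ↑v i) :=
                Finset.sum_congr rfl fun u _ => Finset.sum_comm
            _ = ∑ u : {y // y ∈ T}, ∑ v : {y // y ∈ T},
                  g u * g v * (ShadowAux.interCard u.1 v.1 : ℝ) := by
                refine Finset.sum_congr rfl fun u _ => Finset.sum_congr rfl fun v _ => ?_
                rw [← hxJ, Finset.mul_sum]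
                exact Finset.sum_congr rfl fun i _ => by ring
        have hE : ∑ u : {y // y ∈ T}, ∑ v : {y // y ∈ T},
            g u * g v * (ShadowAux.interCard u.1 v.1 : ℝ) = 0 := by rw [← h3]; exact h2
        have hsplit : ∀ u v : {y // y ∈ T}, g u * g v * (ShadowAux.interCard u.1 v.1 : ℝ)
            = (if u = v then ((s:ℝ) - 1) * (g u * g v) else 0)
              + ((if wt (u.1 + u0) % 4 = 0 then g u else 0)
                  * (if wt (v.1 + u0) % 4 = 0 then g v else 0)
               + (if wt (u.1 + u0) % 4 = 0 then 0 else g u)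
                  * (if wt (v.1 + u0) % 4 = 0 then 0 else g v)) := by
          intro u v
          by_cases huv : u = v
          · subst huv
            rw [hJuu ↑u u.2, if_pos rfl]
            by_cases hq : wt (u.1 + u0) % 4 = 0 <;> simp only [hq, if_true, if_false, ite_true,
              ite_false, if_pos, if_neg, not_false_iff] <;> ring
          · have hval := hJval ↑u u.2 ↑v v.2 (fun h => huv (Subtype.ext h))
            rw [hval, if_neg huv]
            by_cases hq : wt (u.1 + u0) % 4 = 0 <;> by_cases hq' : wt (v.1 + u0) % 4 = 0 <;>
              simp [hq, hq'] <;> ring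
        have hsq : ∀ f : {y // y ∈ T} → ℝ,
            ∑ u : {y // y ∈ T}, ∑ v : {y // y ∈ T}, f u * f v
              = (∑ u : {y // y ∈ T}, f u) ^ 2 := by
          intro f
          rw [sq, Finset.sum_mul_sum]
        have hdiag : ∑ u : {y // y ∈ T}, ∑ v : {y // y ∈ T},
            (if u = v then ((s:ℝ) - 1) * (g u * g v) else 0)
              = ((s:ℝ) - 1) * ∑ u : {y // y ∈ T}, g u ^ 2 := by
          rw [Finset.mul_sum]
          refine Finset.sum_congr rfl fun u _ => ?_
          rw [Finset.sum_ite_eq]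
          simp [sq]
        have hEsplit : (0:ℝ) = ((s:ℝ) - 1) * (∑ u : {y // y ∈ T}, g u ^ 2)
            + ((∑ u : {y // y ∈ T}, if wt (u.1 + u0) % 4 = 0 then g u else 0) ^ 2
             + (∑ u : {y // y ∈ T}, if wt (u.1 + u0) % 4 = 0 then 0 else g u) ^ 2) := by
          calc (0:ℝ) = ∑ u : {y // y ∈ T}, ∑ v : {y // y ∈ T},
              g u * g v * (ShadowAux.interCard u.1 v.1 : ℝ) := hE.symm
            _ = ∑ u : {y // y ∈ T}, ∑ v : {y // y ∈ T},
                ((if u = v then ((s:ℝ) - 1) * (g u * g v) else 0)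
                  + ((if wt (u.1 + u0) % 4 = 0 then g u else 0)
                      * (if wt (v.1 + u0) % 4 = 0 then g v else 0)
                   + (if wt (u.1 + u0) % 4 = 0 then 0 else g u)
                      * (if wt (v.1 + u0) % 4 = 0 then 0 else g v))) :=
                Finset.sum_congr rfl fun u _ => Finset.sum_congr rfl fun v _ => hsplit u v
            _ = _ := by
                simp only [Finset.sum_add_distrib]
                rw [hdiag, hsq (fun u => if wt (u.1 + u0) % 4 = 0 then g u else 0),
                  hsq (fun u => if wt (u.1 + u0) % 4 = 0 then 0 else g u)]
        have h1 : (0:ℝ) ≤ ∑ u : {y // y ∈ T}, g u ^ 2 :=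
          Finset.sum_nonneg fun u _ => sq_nonneg _
        have hscast : (3:ℝ) ≤ (s:ℝ) := by exact_mod_cast hs3
        have hzero : ∑ u : {y // y ∈ T}, g u ^ 2 = 0 := by
          nlinarith [sq_nonneg (∑ u : {y // y ∈ T}, if wt (u.1 + u0) % 4 = 0 then g u else 0),
            sq_nonneg (∑ u : {y // y ∈ T}, if wt (u.1 + u0) % 4 = 0 then 0 else g u)]
        intro u
        have h5 := (Finset.sum_eq_zero_iff_of_nonneg
          (fun u _ => sq_nonneg (g u))).mp hzero u (Finset.mem_univ u)
        exact pow_eq_zero_iff (by norm_num : (2:ℕ) ≠ 0) |>.mp h5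
      have hfin := hli.fintype_card_le_finrank
      rw [Module.finrank_fintype_fun_eq_card] at hfin
      simpa [Fintype.card_coe] using hfin
end

section
/- Let X be a set of cardinality v, and let 𝔅 be a family of k-subsets of X with s ≤ k ≤ v − s such that the pairwise intersection cardinalities |B ∩ B'| for distinct B, B' ∈ 𝔅 take at most s distinct values. Then |𝔅| ≤ C(v, s). -/
open Finset

namespace RCW

variable {X : Type*} [Fintype X] [DecidableEq X]

/-- Monomial function on the Boolean cube (points indexed by subsets). -/
def mon (A : Finset X) : Finset X → ℝ := fun Y => if A ⊆ Y then 1 else 0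

/-- Span of monomials of degree at most `d`. -/
def Wd (X : Type*) [Fintype X] [DecidableEq X] (d : ℕ) : Submodule ℝ (Finset X → ℝ) :=
  Submodule.span ℝ
    ((Finset.image mon (univ.filter (fun A : Finset X => A.card ≤ d))) : Set (Finset X → ℝ))

lemma mon_mem_Wd {A : Finset X} {d : ℕ} (h : A.card ≤ d) : mon A ∈ Wd X d := by
  apply Submodule.subset_span
  simp only [Finset.coe_image, Set.mem_image, Finset.mem_coe, Finset.mem_filter,
    Finset.mem_univ, true_and]
  exact ⟨A, h, rfl⟩

lemma Wd_mono {d d' : ℕ} (h : d ≤ d') : Wd X d ≤ Wd X d' := by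
  apply Submodule.span_mono
  intro g hg
  simp only [Finset.coe_image, Set.mem_image, Finset.mem_coe, Finset.mem_filter,
    Finset.mem_univ, true_and] at hg ⊢
  obtain ⟨A, hA, rfl⟩ := hg
  exact ⟨A, hA.trans h, rfl⟩

lemma mul_mem_Wd (B : Finset X) (c : ℝ) {d : ℕ} {f : Finset X → ℝ} (hf : f ∈ Wd X d) :
    (fun Y : Finset X => (((B ∩ Y).card : ℝ) - c) * f Y) ∈ Wd X (d + 1) := by
  induction hf using Submodule.span_induction with
  | mem g hg =>
    simp only [Finset.coe_image, Set.mem_image, Finset.mem_coe, Finset.mem_filter,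
      Finset.mem_univ, true_and] at hg
    obtain ⟨A, hA, rfl⟩ := hg
    have key : (fun Y : Finset X => (((B ∩ Y).card : ℝ) - c) * mon A Y)
        = (∑ a ∈ B, mon (insert a A)) - c • mon A := by
      funext Y
      by_cases hAY : A ⊆ Y
      · have h2 : ∀ a ∈ B, mon (insert a A) Y = if a ∈ Y then 1 else 0 := by
          intro a _
          unfold mon
          by_cases ha : a ∈ Y
          · simp [ha, Finset.insert_subset_iff, hAY]
          · simp [ha, Finset.insert_subset_iff]
        simp only [Pi.sub_apply, Finset.sum_apply, Pi.smul_apply, smul_eq_mul]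
        rw [Finset.sum_congr rfl h2]
        rw [Finset.sum_boole, Finset.filter_mem_eq_inter]
        simp [mon, hAY]
      · have h2 : ∀ a ∈ B, mon (insert a A) Y = 0 := by
          intro a _
          unfold mon
          rw [if_neg]
          intro hsub
          exact hAY (Finset.Subset.trans (Finset.subset_insert a A) hsub)
        simp only [Pi.sub_apply, Finset.sum_apply, Pi.smul_apply, smul_eq_mul]
        rw [Finset.sum_congr rfl h2]
        simp [mon, hAY]
    rw [key]
    refine sub_mem (Submodule.sum_mem _ fun a _ => mon_mem_Wd ?_)
      (Submodule.smul_mem _ _ (mon_mem_Wd (hA.trans (Nat.le_succ d))))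
    exact (Finset.card_insert_le a A).trans (by omega)
  | zero =>
    have : (fun Y : Finset X => (((B ∩ Y).card : ℝ) - c) * (0 : Finset X → ℝ) Y) = 0 := by
      funext Y; simp
    rw [this]; exact zero_mem _
  | add f g hf hg ihf ihg =>
    have : (fun Y : Finset X => (((B ∩ Y).card : ℝ) - c) * (f + g) Y)
        = (fun Y : Finset X => (((B ∩ Y).card : ℝ) - c) * f Y)
          + fun Y : Finset X => (((B ∩ Y).card : ℝ) - c) * g Y := by
      funext Y; simp [mul_add]
    rw [this]; exact add_mem ihf ihg
  | smul r f hf ih =>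
    have : (fun Y : Finset X => (((B ∩ Y).card : ℝ) - c) * (r • f) Y)
        = r • fun Y : Finset X => (((B ∩ Y).card : ℝ) - c) * f Y := by
      funext Y; simp [smul_eq_mul]; ring
    rw [this]; exact Submodule.smul_mem _ _ ih

lemma prod_mem_Wd (B : Finset X) (L' : Finset ℕ) :
    (fun Y : Finset X => ∏ l ∈ L', (((B ∩ Y).card : ℝ) - l)) ∈ Wd X L'.card := by
  induction L' using Finset.induction_on with
  | empty =>
    have : (fun _ : Finset X => (1:ℝ)) = mon (∅ : Finset X) := by
      funext Y; simp [mon]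
    simpa [this] using mon_mem_Wd (by simp : (∅ : Finset X).card ≤ 0)
  | @insert l S hl ih =>
    have : (fun Y : Finset X => ∏ m ∈ insert l S, (((B ∩ Y).card : ℝ) - m))
        = fun Y : Finset X => (((B ∩ Y).card : ℝ) - l) * ∏ m ∈ S, (((B ∩ Y).card : ℝ) - m) := by
      funext Y; rw [Finset.prod_insert hl]
    rw [this, Finset.card_insert_of_notMem hl]
    exact mul_mem_Wd B l ih

end RCW

open Finset RCW in
/-- (Ray-Chaudhuri–Wilson.)  Let `X` be a set of cardinality `v`, and let `𝔅` be a
family of `k`-subsets of `X` with `s ≤ k ≤ v − s` such that the intersection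
cardinalities `|B ∩ B'|` of distinct members of `𝔅` take at most `s` distinct values.
Then `|𝔅| ≤ C(v, s)`. -/
theorem ray_chaudhuri_wilson {X : Type*} [Fintype X] [DecidableEq X]
    (v s k : ℕ) (hv : Fintype.card X = v) (hsk : s ≤ k) (hkv : k ≤ v - s)
    (𝔅 : Finset (Finset X)) (hcard : ∀ B ∈ 𝔅, B.card = k)
    (L : Finset ℕ) (hL : L.card ≤ s)
    (hint : ∀ B ∈ 𝔅, ∀ B' ∈ 𝔅, B ≠ B' → (B ∩ B').card ∈ L) :
    𝔅.card ≤ Nat.choose v s := by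
  classical
  -- filtered label set
  set L' : Finset ℕ := L.filter (· < k) with hL'def
  have hL'card : L'.card ≤ s := (Finset.card_filter_le _ _).trans hL
  have hL'lt : ∀ l ∈ L', l < k := fun l hl => (Finset.mem_filter.mp hl).2
  have hint' : ∀ B ∈ 𝔅, ∀ B' ∈ 𝔅, B ≠ B' → (B ∩ B').card ∈ L' := by
    intro B hB B' hB' hne
    refine Finset.mem_filter.mpr ⟨hint B hB B' hB' hne, ?_⟩
    rw [← hcard B hB]
    refine Finset.card_lt_card ⟨Finset.inter_subset_left, fun hsub => ?_⟩
    have hBB' : B ⊆ B' := fun x hx => (Finset.mem_inter.mp (hsub hx)).2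
    exact hne (Finset.eq_of_subset_of_card_le hBB'
      (le_of_eq ((hcard B' hB').trans (hcard B hB).symm)))
  -- the two families of functions
  set fB : Finset X → Finset X → ℝ :=
    fun B Y => ∏ l ∈ L', (((B ∩ Y).card : ℝ) - l) with hfB
  set gI : Finset X → Finset X → ℝ :=
    fun I Y => (if I ⊆ Y then (1:ℝ) else 0) * ((Y.card : ℝ) - k) with hgI
  set T' : Finset (Finset X) := univ.filter (fun I : Finset X => I.card + 1 ≤ s) with hT'
  set φ : (↥𝔅) ⊕ (↥T') → (Finset X → ℝ) :=
    Sum.elim (fun B => fB (B : Finset X)) (fun I => gI (I : Finset X)) with hφ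
  -- linear independence
  have hindep : LinearIndependent ℝ φ := by
    rw [Fintype.linearIndependent_iff]
    intro g hg
    -- evaluation helper
    have heval : ∀ P : Finset X,
        (∑ B : ↥𝔅, g (Sum.inl B) * fB (B : Finset X) P)
          + (∑ I : ↥T', g (Sum.inr I) * gI (I : Finset X) P) = 0 := by
      intro P
      have h := congrFun hg P
      rw [Finset.sum_apply] at h
      simp only [Pi.smul_apply, smul_eq_mul, Pi.zero_apply] at h
      rw [Fintype.sum_sum_type] at h
      simpa [φ] using h
    -- first coordinates
    have hB0 : ∀ B : ↥𝔅, g (Sum.inl B) = 0 := by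
      intro B
      have h1 := heval (B : Finset X)
      have hg2 : (∑ I : ↥T', g (Sum.inr I) * gI (I : Finset X) (B : Finset X)) = 0 :=
        Finset.sum_eq_zero fun I _ => by simp [gI, hcard _ B.2]
      rw [hg2, add_zero] at h1
      have h2 : ∀ B' : ↥𝔅, B' ≠ B → g (Sum.inl B') * fB (B' : Finset X) (B : Finset X) = 0 := by
        intro B' hne
        have hmem : ((B' : Finset X) ∩ (B : Finset X)).card ∈ L' :=
          hint' _ B'.2 _ B.2 (fun h => hne (Subtype.ext h))
        have : fB (B' : Finset X) (B : Finset X) = 0 :=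
          Finset.prod_eq_zero hmem (by simp)
        rw [this, mul_zero]
      rw [Finset.sum_eq_single B (fun B' _ hne => h2 B' hne)
        (fun h => absurd (Finset.mem_univ B) h)] at h1
      have hprod : fB (B : Finset X) (B : Finset X) ≠ 0 := by
        simp only [fB, Finset.inter_self, hcard _ B.2]
        refine Finset.prod_ne_zero_iff.mpr fun l hl => ?_
        have := hL'lt l hl
        have : (l : ℝ) < (k : ℝ) := by exact_mod_cast this
        exact sub_ne_zero_of_ne (by linarith)
      exact (mul_eq_zero.mp h1).resolve_right hprod
    -- second coordinates, by strong induction on card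
    have hI0 : ∀ n : ℕ, ∀ I : ↥T', (I : Finset X).card = n → g (Sum.inr I) = 0 := by
      intro n
      induction n using Nat.strong_induction_on with
      | _ n ih =>
        intro I hIcard
        have h1 := heval (I : Finset X)
        have hz : (∑ B : ↥𝔅, g (Sum.inl B) * fB (B : Finset X) (I : Finset X)) = 0 :=
          Finset.sum_eq_zero fun B _ => by rw [hB0 B, zero_mul]
        rw [hz, zero_add] at h1
        have h2 : ∀ J : ↥T', J ≠ I → g (Sum.inr J) * gI (J : Finset X) (I : Finset X) = 0 := by
          intro J hne
          by_cases hsub : (J : Finset X) ⊆ (I : Finset X)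
          · have hss : (J : Finset X) ⊂ (I : Finset X) :=
              ⟨hsub, fun h => hne (Subtype.ext (Finset.Subset.antisymm hsub h))⟩
            have hlt : (J : Finset X).card < n := hIcard ▸ Finset.card_lt_card hss
            rw [ih _ hlt J rfl, zero_mul]
          · simp [gI, hsub]
        rw [Finset.sum_eq_single I (fun J _ hne => h2 J hne)
          (fun h => absurd (Finset.mem_univ I) h)] at h1
        simp only [gI, Finset.Subset.refl, if_pos, one_mul] at h1
        have hIk : (I : Finset X).card < k := by
          have := (Finset.mem_filter.mp I.2).2
          omega
        have hne : ((I : Finset X).card : ℝ) - (k : ℝ) ≠ 0 := by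
          have : ((I : Finset X).card : ℝ) < (k : ℝ) := by exact_mod_cast hIk
          intro h; linarith [sub_eq_zero.mp h]
        exact (mul_eq_zero.mp h1).resolve_right hne
    intro i
    cases i with
    | inl B => exact hB0 B
    | inr I => exact hI0 _ I rfl

  -- membership in the span of monomials of degree ≤ s
  have hmemW : ∀ i, φ i ∈ Wd X s := by
    intro i
    cases i with
    | inl B =>
      have h := prod_mem_Wd (X := X) (B : Finset X) L'
      exact Wd_mono hL'card h
    | inr I =>
      have h1 : (I : Finset X).card + 1 ≤ s := (Finset.mem_filter.mp I.2).2
      have h2 := mul_mem_Wd (X := X) univ (k : ℝ) (mon_mem_Wd (le_refl (I : Finset X).card))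
      have heq : φ (Sum.inr I)
          = fun Y : Finset X => (((univ ∩ Y).card : ℝ) - k) * mon (I : Finset X) Y := by
        funext Y
        simp [φ, gI, mon, Finset.univ_inter, mul_comm]
      rw [heq]
      exact Wd_mono h1 h2
  -- transfer to the submodule and count dimensions
  let ψ : (↥𝔅) ⊕ (↥T') → ↥(Wd X s) := fun i => ⟨φ i, hmemW i⟩
  have hψ : LinearIndependent ℝ ψ :=
    LinearIndependent.of_comp (Wd X s).subtype (by
      have : ((Wd X s).subtype ∘ ψ) = φ := rfl
      rw [this]; exact hindep)
  have hdim : Fintype.card ((↥𝔅) ⊕ (↥T')) ≤ Module.finrank ℝ ↥(Wd X s) :=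
    hψ.fintype_card_le_finrank
  have hfr : Module.finrank ℝ ↥(Wd X s)
      ≤ (univ.filter (fun A : Finset X => A.card ≤ s)).card := by
    refine (finrank_span_finset_le_card _).trans ?_
    exact Finset.card_image_le
  have hcardsum : Fintype.card ((↥𝔅) ⊕ (↥T')) = 𝔅.card + T'.card := by
    simp [Fintype.card_sum]
  have hsplit : (univ.filter (fun A : Finset X => A.card ≤ s)).card
      = T'.card + (univ.filter (fun A : Finset X => A.card = s)).card := by
    rw [hT', ← Finset.card_union_of_disjoint]
    · congr 1
      ext A
      simp only [Finset.mem_union, Finset.mem_filter, Finset.mem_univ, true_and]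
      omega
    · rw [Finset.disjoint_left]
      intro A hA hA'
      simp only [Finset.mem_filter, Finset.mem_univ, true_and] at hA hA'
      omega
  have hchoose : (univ.filter (fun A : Finset X => A.card = s)).card = Nat.choose v s := by
    rw [show (univ.filter (fun A : Finset X => A.card = s)) = Finset.powersetCard s univ from by
      ext A; simp [Finset.mem_powersetCard_univ]]
    rw [Finset.card_powersetCard, Finset.card_univ, hv]
  rw [hcardsum] at hdim
  omega
end
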